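/- arXiv:2501.10828 — 9 statements merged into one kernel-verified Lean document; each statement's English description precedes it below -/
import Mathlib

section
/- Let G be a connected graph, r a vertex of G, and P an isometric path in G with end-vertices x and y. If A is a set of vertices of P that forms an antichain with respect to r (i.e., for any two distinct a,b in A, neither lies on a shortest path from r through the other in the BFS-DAG rooted at r), then the number of edges of P is at least |d(r,x) - d(r,y)| + |A| - 1. -/
/-! Along an isometric `(x,y)`-path `P`, the value `d(x,a) - d(r,a)` separates the vertices `a`
of an antichain: if `a` precedes `b` on `P` and the values agree, then
`d(r,b) = d(r,a) + d(a,b)`, so `a` is reached from `b` in the BFS-DAG. By the triangle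
inequality the values lie in `[-d(r,x), |P| - d(r,y)]`, whence
`|A| ≤ |P| + 1 - (d(r,y) - d(r,x))`; reversing `P` gives the bound with `x` and `y` exchanged. -/

open SimpleGraph

variable {V : Type*}

/-- A walk is an isometric path if it is a path and its length equals the distance
between its end-vertices. -/
def IsometricPath (G : SimpleGraph V) {u v : V} (p : G.Walk u v) : Prop :=
  p.IsPath ∧ p.length = G.dist u v

/-- `RootedCover G r k` : the vertices of every isometric path of `G` can be covered by
`k` many `r`-rooted isometric paths of `G`. -/
def RootedCover (G : SimpleGraph V) (r : V) (k : ℕ) : Prop :=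
  ∀ ⦃u v : V⦄ (p : G.Walk u v), IsometricPath G p →
    ∃ Q : Fin k → Σ w : V, G.Walk r w,
      (∀ i, IsometricPath G (Q i).2) ∧
      ∀ x ∈ p.support, ∃ i, x ∈ (Q i).2.support

/-- The isometric path complexity of `G` relative to a root `r`. -/
noncomputable def ipcoR (G : SimpleGraph V) (r : V) : ℕ := sInf {k | RootedCover G r k}

/-- The isometric path complexity of `G`. -/
noncomputable def ipco (G : SimpleGraph V) : ℕ := sInf {k | ∃ r, RootedCover G r k}

/-- The strong isometric path complexity of `G`. -/
noncomputable def sipco (G : SimpleGraph V) : ℕ := sInf {k | ∀ r, RootedCover G r k}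

/-- One step of the BFS-DAG of `G` rooted at `r`: there is a directed edge from `y` to `x`
when `xy` is an edge of `G` and `y` is one step farther from `r` than `x`. -/
def BFSStep (G : SimpleGraph V) (r : V) (y x : V) : Prop :=
  G.Adj x y ∧ G.dist r y = G.dist r x + 1

/-- Reachability by a directed path in the BFS-DAG of `G` rooted at `r`. -/
def BFSReach (G : SimpleGraph V) (r : V) (a b : V) : Prop :=
  Relation.ReflTransGen (BFSStep G r) a b

/-- A set of vertices is an antichain w.r.t. `r` if no element reaches another by a
directed path in the BFS-DAG rooted at `r`. -/
def IsBFSAntichain (G : SimpleGraph V) (r : V) (A : Finset V) : Prop :=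
  ∀ a ∈ A, ∀ b ∈ A, a ≠ b → ¬ BFSReach G r a b

namespace SimpleGraph.Walk

variable {G : SimpleGraph V} {u v a b : V} {p : G.Walk u v}

lemma reachable_of_mem_support (ha : a ∈ p.support) (hb : b ∈ p.support) : G.Reachable a b := by
  classical
  exact (p.takeUntil a ha).reachable.symm.trans (p.takeUntil b hb).reachable

lemma dist_add_dist_of_mem_support (hp : p.length = G.dist u v) (ha : a ∈ p.support) :
    G.dist u a + G.dist a v = G.dist u v := by
  classical
  have hsplit := congrArg length (p.take_spec ha)
  rwa [length_append, length_eq_dist_of_subwalk hp (p.isSubwalk_takeUntil ha),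
    length_eq_dist_of_subwalk hp (p.isSubwalk_dropUntil ha), hp] at hsplit

lemma dist_add_dist_eq_or_of_mem_support (hp : p.length = G.dist u v) (ha : a ∈ p.support)
    (hb : b ∈ p.support) :
    G.dist u a + G.dist a b = G.dist u b ∨ G.dist u b + G.dist b a = G.dist u a := by
  classical
  rw [← p.take_spec ha, mem_support_append_iff] at hb
  rcases hb with hb_before | hb_after
  · exact .inr <| dist_add_dist_of_mem_support
      (length_eq_dist_of_subwalk hp (p.isSubwalk_takeUntil ha)) hb_before
  · have hab := dist_add_dist_of_mem_support
      (length_eq_dist_of_subwalk hp (p.isSubwalk_dropUntil ha)) hb_after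
    have hua := dist_add_dist_of_mem_support hp ha
    have hub := dist_add_dist_of_mem_support hp
      ((p.isSubwalk_dropUntil ha).support_subset hb_after)
    omega

end SimpleGraph.Walk

section BFS

variable {G : SimpleGraph V} {r a b : V}

lemma bfsReach_of_walk (q : G.Walk a b) (hq : G.dist r a = G.dist r b + q.length) :
    BFSReach G r a b := by
  induction q with
  | nil => exact .refl
  | @cons a c b hac q ih =>
    rw [Walk.length_cons] at hq
    have hrc : G.dist r c ≤ G.dist r b + q.length :=
      (q.reachable.symm.dist_triangle_right r).trans
        (by simpa [SimpleGraph.dist_comm] using G.dist_le q.reverse)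
    have hra : G.dist r a ≤ G.dist r c + 1 :=
      (dist_eq_one_iff_adj.2 hac.symm) ▸ hac.symm.reachable.dist_triangle_right r
    exact .head ⟨hac.symm, by omega⟩ (ih (by omega))

lemma bfsReach_of_dist_eq_add (hab : G.Reachable a b) (h : G.dist r a = G.dist r b + G.dist a b) :
    BFSReach G r a b := by
  obtain ⟨q, hq⟩ := hab.exists_walk_length_eq_dist
  exact bfsReach_of_walk q (hq ▸ h)

lemma IsBFSAntichain.eq_of_dist_eq_add {A : Finset V} (hA : IsBFSAntichain G r A) (ha : a ∈ A)
    (hb : b ∈ A) (hab : G.Reachable a b) (h : G.dist r a = G.dist r b + G.dist a b) : a = b :=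
  by_contra fun hne => hA a ha b hb hne (bfsReach_of_dist_eq_add hab h)

end BFS

lemma card_add_dist_le_of_isBFSAntichain {G : SimpleGraph V} {r x y : V} {p : G.Walk x y}
    (hp : p.length = G.dist x y) {A : Finset V} (hA : ∀ a ∈ A, a ∈ p.support)
    (hanti : IsBFSAntichain G r A) :
    A.card + G.dist r y ≤ G.dist x y + G.dist r x + 1 := by
  have hreach : ∀ a ∈ A, ∀ b ∈ A, G.Reachable a b := fun a ha b hb =>
    Walk.reachable_of_mem_support (hA a ha) (hA b hb)
  have hmaps : Set.MapsTo (fun a => (G.dist x a : ℤ) - G.dist r a) A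
      (Finset.Icc (-(G.dist r x : ℤ)) (G.dist x y - G.dist r y)) := by
    intro a ha
    have hxa : G.dist r a ≤ G.dist r x + G.dist x a :=
      (Walk.reachable_of_mem_support p.start_mem_support (hA a ha)).dist_triangle_right r
    have hay : G.dist r y ≤ G.dist r a + G.dist a y :=
      (Walk.reachable_of_mem_support (hA a ha) p.end_mem_support).dist_triangle_right r
    have hxay := Walk.dist_add_dist_of_mem_support hp (hA a ha)
    simp only [Finset.coe_Icc, Set.mem_Icc]
    omega
  have hinj : Set.InjOn (fun a => (G.dist x a : ℤ) - G.dist r a) A := by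
    intro a ha b hb hab
    dsimp only at hab
    rcases Walk.dist_add_dist_eq_or_of_mem_support hp (hA a ha) (hA b hb) with hxab | hxba
    · refine (hanti.eq_of_dist_eq_add hb ha (hreach b hb a ha) ?_).symm
      rw [SimpleGraph.dist_comm (u := b)]
      omega
    · refine hanti.eq_of_dist_eq_add ha hb (hreach a ha b hb) ?_
      rw [SimpleGraph.dist_comm (u := a)]
      omega
  have hcard := Finset.card_le_card_of_injOn _ hmaps hinj
  have hxy : G.dist r y ≤ G.dist r x + G.dist x y := p.reachable.dist_triangle_right r
  rw [Int.card_Icc] at hcard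
  omega

theorem length_ge_of_antichain_general (G : SimpleGraph V) (r : V)
    {x y : V} (p : G.Walk x y) (hp : IsometricPath G p)
    (A : Finset V) (hA : ∀ a ∈ A, a ∈ p.support) (hanti : IsBFSAntichain G r A) :
    Nat.dist (G.dist r x) (G.dist r y) + A.card ≤ p.length + 1 := by
  have hxy := card_add_dist_le_of_isBFSAntichain hp.2 hA hanti
  have hyx := card_add_dist_le_of_isBFSAntichain (p := p.reverse)
    (by rw [Walk.length_reverse, hp.2, SimpleGraph.dist_comm]) (by simpa using hA) hanti
  rw [SimpleGraph.dist_comm (u := y)] at hyx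
  rw [hp.2, Nat.dist]
  omega

/-- If `P` is an isometric `(x,y)`-path of a connected graph `G` and `A` is an
antichain (w.r.t. a vertex `r`) of vertices of `P`, then
`|E(P)| ≥ |d(r,x) - d(r,y)| + |A| - 1`. -/
theorem length_ge_of_antichain (G : SimpleGraph V) (hG : G.Connected) (r : V)
    {x y : V} (p : G.Walk x y) (hp : IsometricPath G p)
    (A : Finset V) (hA : ∀ a ∈ A, a ∈ p.support) (hanti : IsBFSAntichain G r A) :
    Nat.dist (G.dist r x) (G.dist r y) + A.card ≤ p.length + 1 :=
  length_ge_of_antichain_general G r p hp A hA hanti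
end

section
/- For any connected graph G and any vertex r, the minimum number of r-rooted isometric paths needed to cover the vertices of any isometric path of G (i.e., ipco(G,r)) equals the maximum, over all isometric paths P of G, of the size of a largest antichain of V(P) in the BFS-DAG of G rooted at r. -/
/-
A rooted isometric path, read from its far end, descends the BFS-DAG, so its vertices form a chain
and it meets an antichain at most once; hence `k` rooted isometric paths covering an isometric path
bound the antichains on it by `k`. Conversely, a chain of the BFS-DAG lies on one descending walk to
`r`, whose reverse is an `r`-rooted isometric path, so by Dilworth's theorem an isometric path whose
antichains have at most `k` elements is covered by `k` rooted isometric paths. The values of `k`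
admissible in `ipcoR` are therefore exactly the upper bounds of the antichain sizes, and in `ℕ` the
infimum of the upper bounds of a set is its supremum (both sides being `0` for unbounded sets).
-/


open SimpleGraph

variable {V : Type*}

/-- The maximum, over all isometric paths `P` of `G`, of the size of a largest antichain of
vertices of `P` in the BFS-DAG of `G` rooted at `r`. -/
noncomputable def maxPathAntichain (G : SimpleGraph V) (r : V) : ℕ :=
  sSup {n | ∃ (u v : V) (p : G.Walk u v) (A : Finset V),
    IsometricPath G p ∧ (∀ a ∈ A, a ∈ p.support) ∧ IsBFSAntichain G r A ∧ A.card = n}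


open Finset

section ChainCover

variable {α ι : Type*}

lemma IsAntichain.card_le_card_of_forall_exists_isChain {R : α → α → Prop} {A : Finset α}
    (hA : IsAntichain R (A : Set α)) {I : Finset ι} {c : ι → Set α}
    (hc : ∀ i ∈ I, IsChain R (c i)) (hcov : ∀ x ∈ A, ∃ i ∈ I, x ∈ c i) : #A ≤ #I :=
  card_le_card_of_forall_subsingleton (fun x i => x ∈ c i) hcov fun i hi =>
    (inter_subsingleton_of_isAntichain_of_isChain hA (hc i hi)).anti fun _ hx => hx

lemma IsAntichain.exists_mem_of_card_le {R : α → α → Prop} {A : Finset α}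
    (hA : IsAntichain R (A : Set α)) {I : Finset ι} {c : ι → Set α}
    (hc : ∀ i ∈ I, IsChain R (c i)) (hcov : ∀ x ∈ A, ∃ i ∈ I, x ∈ c i) (hIA : #I ≤ #A)
    {i : ι} (hi : i ∈ I) : ∃ x ∈ A, x ∈ c i := by
  classical
  by_contra! hmiss
  have hA' : #A ≤ #(I.erase i) := by
    refine hA.card_le_card_of_forall_exists_isChain (fun j hj => hc j (mem_of_mem_erase hj))
      fun x hx => ?_
    obtain ⟨j, hj, hxj⟩ := hcov x hx
    exact ⟨j, mem_erase.2 ⟨by rintro rfl; exact hmiss x hx hxj, hj⟩, hxj⟩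
  have := card_erase_lt_of_mem hi
  omega

variable [PartialOrder α]

lemma Finset.exists_greatest_of_isChain {t : Finset α} (ht : IsChain (· ≤ ·) (t : Set α))
    (hne : t.Nonempty) : ∃ m ∈ t, ∀ y ∈ t, y ≤ m := by
  obtain ⟨m, hm⟩ := t.exists_maximal hne
  exact ⟨m, hm.1, fun y hy => (ht.total hy hm.1).elim id fun h => hm.2 hy h⟩

variable [DecidableEq α] {t : Finset α} {k : ℕ}

lemma Finpartition.exists_mem_of_isAntichain (P : Finpartition t)
    (hP : ∀ c ∈ P.parts, IsChain (· ≤ ·) (c : Set α)) {B : Finset α} (hBt : B ⊆ t)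
    (hB : IsAntichain (· ≤ ·) (B : Set α)) (hPB : #P.parts ≤ #B) {c : Finset α}
    (hc : c ∈ P.parts) : ∃ x ∈ B, x ∈ c :=
  hB.exists_mem_of_card_le (c := (↑)) hP (fun _ hx => P.exists_mem (hBt hx)) hPB hc

/-- In each chain pick the highest element lying on an antichain of size `k`. Such an
antichain meets every chain, and this makes the chosen elements pairwise incomparable. -/
lemma Finpartition.exists_incomparable_tops [Nonempty α] (P : Finpartition t)
    (hPk : #P.parts ≤ k) (hP : ∀ c ∈ P.parts, IsChain (· ≤ ·) (c : Set α))
    (hwide : ∃ A ⊆ t, IsAntichain (· ≤ ·) (A : Set α) ∧ k ≤ #A) :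
    ∃ top : Finset α → α, (∀ c ∈ P.parts, top c ∈ c) ∧
      (∀ c ∈ P.parts, ∀ B ⊆ t, IsAntichain (· ≤ ·) (B : Set α) → k ≤ #B →
        ∀ y ∈ B, y ∈ c → y ≤ top c) ∧
      ∀ c ∈ P.parts, ∀ d ∈ P.parts, top c ≤ top d → c = d := by
  classical
  obtain ⟨A, hAt, hA, hkA⟩ := hwide
  let M : α → Prop := fun x => ∃ B ⊆ t, IsAntichain (· ≤ ·) (B : Set α) ∧ k ≤ #B ∧ x ∈ B
  have htop : ∀ c ∈ P.parts, ∃ m ∈ c.filter M, ∀ y ∈ c.filter M, y ≤ m := fun c hc => by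
    refine exists_greatest_of_isChain ((hP c hc).mono (coe_subset.2 (filter_subset _ _))) ?_
    obtain ⟨x, hxA, hxc⟩ := P.exists_mem_of_isAntichain hP hAt hA (hPk.trans hkA) hc
    exact ⟨x, mem_filter.2 ⟨hxc, A, hAt, hA, hkA, hxA⟩⟩
  choose! top htopM htop using htop
  refine ⟨top, fun c hc => (mem_filter.1 (htopM c hc)).1,
    fun c hc B hBt hB hkB y hyB hyc => htop c hc y (mem_filter.2 ⟨hyc, B, hBt, hB, hkB, hyB⟩),
    fun c hc d hd hcd => ?_⟩
  obtain ⟨hdd, B, hBt, hB, hkB, hdB⟩ := mem_filter.1 (htopM d hd)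
  obtain ⟨y, hyB, hyc⟩ := P.exists_mem_of_isAntichain hP hBt hB (hPk.trans hkB) hc
  have hyd : y = top d :=
    hB.eq hyB hdB ((htop c hc y (mem_filter.2 ⟨hyc, B, hBt, hB, hkB, hyB⟩)).trans hcd)
  by_contra hne
  exact disjoint_left.1 (P.disjoint hc hd hne) hyc (hyd ▸ hdd)

/-- Otherwise `a` and the tops would form an antichain of size `#P.parts + 1 > k`. -/
lemma Finpartition.exists_top_le_of_maximal {s : Finset α} {a : α} (ha : Maximal (· ∈ s) a)
    (hs : ∀ A ⊆ s, IsAntichain (· ≤ ·) (A : Set α) → #A ≤ k) (P : Finpartition (s.erase a))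
    (hkP : k ≤ #P.parts) {top : Finset α → α} (htop_mem : ∀ c ∈ P.parts, top c ∈ c)
    (htop_inc : ∀ c ∈ P.parts, ∀ d ∈ P.parts, top c ≤ top d → c = d) :
    ∃ c ∈ P.parts, top c ≤ a := by
  classical
  by_contra! hlow
  have htop_mem' : ∀ c ∈ P.parts, top c ∈ s.erase a := fun c hc => P.le hc (htop_mem c hc)
  have hcard : #(insert a (P.parts.image top)) = #P.parts + 1 := by
    rw [card_insert_of_notMem fun h => ?_, card_image_of_injOn fun c hc d hd h =>
      htop_inc c hc d hd h.le]
    obtain ⟨c, hc, rfl⟩ := mem_image.1 h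
    exact notMem_erase _ _ (htop_mem' c hc)
  have hanti : IsAntichain (· ≤ ·) (↑(insert a (P.parts.image top)) : Set α) := by
    rw [coe_insert, coe_image]
    refine IsAntichain.insert ?_ (fun _ ⟨c, hc, hca⟩ _ => hca ▸ hlow c hc) ?_
    · rintro _ ⟨c, hc, rfl⟩ _ ⟨d, hd, rfl⟩ hne hcd
      exact hne (congrArg top (htop_inc c hc d hd hcd))
    · rintro _ ⟨c, hc, rfl⟩ _ hac
      exact hlow c hc (ha.2 (mem_of_mem_erase (htop_mem' c hc)) hac)
  have := hs _ (insert_subset ha.1 (image_subset_iff.2 fun c hc =>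
    mem_of_mem_erase (htop_mem' c hc))) hanti
  omega

/-- `K` is `{a}`, or, when `s.erase a` has an antichain of size `k`, `a` together with the elements
of some part of `P` below the top of that part. -/
lemma exists_isChain_forall_isAntichain_card_lt {s : Finset α} {a : α} (ha : Maximal (· ∈ s) a)
    (hs : ∀ A ⊆ s, IsAntichain (· ≤ ·) (A : Set α) → #A ≤ k) (P : Finpartition (s.erase a))
    (hPk : #P.parts ≤ k) (hP : ∀ c ∈ P.parts, IsChain (· ≤ ·) (c : Set α)) :
    ∃ K ⊆ s, a ∈ K ∧ IsChain (· ≤ ·) (K : Set α) ∧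
      ∀ A ⊆ s \ K, IsAntichain (· ≤ ·) (A : Set α) → #A < k := by
  classical
  by_cases hwide : ∃ A ⊆ s.erase a, IsAntichain (· ≤ ·) (A : Set α) ∧ k ≤ #A
  swap
  · simp only [not_exists, not_and, not_le] at hwide
    refine ⟨{a}, singleton_subset_iff.2 ha.1, mem_singleton_self a, by simp,
      fun A hA hAc => hwide A ?_ hAc⟩
    rwa [← sdiff_singleton_eq_erase]
  have : Nonempty α := ⟨a⟩
  obtain ⟨top, htop_mem, htop_ge, htop_inc⟩ := P.exists_incomparable_tops hPk hP hwide
  obtain ⟨A, hAt, hA, hkA⟩ := hwide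
  have hkP : k ≤ #P.parts := hkA.trans <|
    hA.card_le_card_of_forall_exists_isChain hP fun x hx => P.exists_mem (hAt hx)
  obtain ⟨c, hc, hca⟩ := P.exists_top_le_of_maximal ha hs hkP htop_mem htop_inc
  refine ⟨insert a (c.filter (· ≤ top c)), insert_subset ha.1 fun y hy =>
    mem_of_mem_erase (P.le hc (mem_filter.1 hy).1), mem_insert_self _ _, ?_, ?_⟩
  · rw [coe_insert]
    exact ((hP c hc).mono (coe_subset.2 (filter_subset _ _))).insert fun y hy _ =>
      .inr ((mem_filter.1 hy).2.trans hca)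
  · intro B hBK hB
    by_contra! hkB
    have hBt : B ⊆ s.erase a := fun x hx => by
      obtain ⟨hxs, hxK⟩ := mem_sdiff.1 (hBK hx)
      exact mem_erase.2 ⟨fun h => hxK (h ▸ mem_insert_self _ _), hxs⟩
    obtain ⟨y, hyB, hyc⟩ := P.exists_mem_of_isAntichain hP hBt hB (hPk.trans hkB) hc
    exact (mem_sdiff.1 (hBK hyB)).2 <|
      mem_insert_of_mem (mem_filter.2 ⟨hyc, htop_ge c hc B hBt hB hkB y hyB hyc⟩)

/-- Dilworth's theorem, by Galvin's induction. -/
theorem Finset.exists_finpartition_isChain (s : Finset α)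
    (hs : ∀ A ⊆ s, IsAntichain (· ≤ ·) (A : Set α) → #A ≤ k) :
    ∃ P : Finpartition s, #P.parts ≤ k ∧ ∀ c ∈ P.parts, IsChain (· ≤ ·) (c : Set α) := by
  induction s using Finset.strongInduction generalizing k with
  | H s ih =>
  rcases s.eq_empty_or_nonempty with rfl | hne
  · exact ⟨Finpartition.empty _, by simp, by simp⟩
  obtain ⟨a, ha⟩ := s.exists_maximal hne
  obtain ⟨P, hPk, hP⟩ :=
    ih _ (erase_ssubset ha.1) fun A hA => hs A (hA.trans (erase_subset _ _))
  obtain ⟨K, hKs, haK, hK, hKk⟩ := exists_isChain_forall_isAntichain_card_lt ha hs P hPk hP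
  obtain ⟨Q, hQk, hQ⟩ := ih (s \ K) (sdiff_ssubset hKs ⟨a, haK⟩) (k := k - 1)
    fun A hA hAc => Nat.le_sub_one_of_lt (hKk A hA hAc)
  have hk : 1 ≤ k := by simpa using hs {a} (by simpa using ha.1) (by simp)
  refine ⟨Q.extend (b := K) (ne_empty_of_mem haK) disjoint_sdiff_self_left
    (sdiff_union_of_subset hKs), ?_, ?_⟩
  · rw [Finpartition.card_extend]
    omega
  · simp only [Finpartition.extend_parts, mem_insert, forall_eq_or_imp]
    exact ⟨hK, hQ⟩

end ChainCover

theorem Finset.exists_isChain_cover {α : Type*} [PartialOrder α] (s : Finset α) {k : ℕ}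
    (hs : ∀ A ⊆ s, IsAntichain (· ≤ ·) (A : Set α) → #A ≤ k) :
    ∃ c : Fin k → Finset α, (∀ i, IsChain (· ≤ ·) (c i : Set α)) ∧ ∀ x ∈ s, ∃ i, x ∈ c i := by
  classical
  obtain ⟨P, hPk, hP⟩ := s.exists_finpartition_isChain hs
  refine ⟨fun i => P.parts.toList.getD i ∅, fun i => ?_, fun x hx => ?_⟩
  · dsimp only
    rcases lt_or_ge (i : ℕ) P.parts.toList.length with hi | hi
    · rw [List.getD_eq_getElem _ _ hi]
      exact hP _ (mem_toList.1 (List.getElem_mem hi))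
    · rw [List.getD_eq_default _ _ hi]
      simp
  · obtain ⟨c, hc, hxc⟩ := P.exists_mem hx
    obtain ⟨n, hn, rfl⟩ := List.mem_iff_getElem.1 (mem_toList.2 hc)
    exact ⟨⟨n, hn.trans_le (by simpa using hPk)⟩, by
      dsimp only
      rwa [List.getD_eq_getElem _ _ hn]⟩

lemma Nat.sInf_upperBounds (s : Set ℕ) : sInf (upperBounds s) = sSup s := by
  rcases s.eq_empty_or_nonempty with rfl | hne
  · simp
  by_cases hs : BddAbove s
  · exact csInf_upperBounds_eq_csSup hs hne
  · rw [csSup_of_not_bddAbove hs, Set.not_nonempty_iff_eq_empty.1 hs]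
    simp

section BFSDescent

variable {G : SimpleGraph V} {r : V}

lemma BFSReach.dist_le {a b : V} (h : BFSReach G r a b) : G.dist r b ≤ G.dist r a := by
  induction h with
  | refl => exact le_rfl
  | tail _ hstep _ => have := hstep.2; omega

lemma BFSReach.dist_lt {a b : V} (h : BFSReach G r a b) (hne : a ≠ b) :
    G.dist r b < G.dist r a := by
  induction h with
  | refl => exact absurd rfl hne
  | tail hac hstep _ => have := BFSReach.dist_le hac; have := hstep.2; omega

lemma BFSReach.antisymm {a b : V} (hab : BFSReach G r a b) (hba : BFSReach G r b a) : a = b :=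
  by_contra fun hne => (hab.dist_lt hne).not_ge hba.dist_le

lemma BFSReach.of_isChain_of_dist_le {s : Set V} (hs : IsChain (BFSReach G r) s) {a b : V}
    (ha : a ∈ s) (hb : b ∈ s) (hba : G.dist r b ≤ G.dist r a) : BFSReach G r a b := by
  rcases eq_or_ne a b with rfl | hne
  · exact .refl
  exact (hs ha hb hne).resolve_right fun h => (h.dist_lt hne.symm).not_ge hba

variable (G r) in
abbrev bfsReachOrder : PartialOrder V where
  le := BFSReach G r
  le_refl _ := .refl
  le_trans _ _ _ := .trans
  le_antisymm _ _ := BFSReach.antisymm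

variable (G r) in
/-- The directed walks of the BFS-DAG rooted at `r`. -/
def IsBFSDescending {a b : V} (p : G.Walk a b) : Prop :=
  ∀ d ∈ p.darts, BFSStep G r d.fst d.snd

@[simp] lemma isBFSDescending_nil {a : V} : IsBFSDescending G r (Walk.nil : G.Walk a a) := by
  simp [IsBFSDescending]

@[simp] lemma isBFSDescending_cons {a b c : V} (h : G.Adj a b) (p : G.Walk b c) :
    IsBFSDescending G r (Walk.cons h p) ↔ BFSStep G r a b ∧ IsBFSDescending G r p := by
  simp [IsBFSDescending]

lemma IsBFSDescending.append {a b c : V} {p : G.Walk a b} {q : G.Walk b c}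
    (hp : IsBFSDescending G r p) (hq : IsBFSDescending G r q) :
    IsBFSDescending G r (p.append q) := by
  simp only [IsBFSDescending, Walk.darts_append, List.mem_append]
  rintro d (hd | hd)
  exacts [hp d hd, hq d hd]

lemma isBFSDescending_iff_dist_eq {a b : V} {p : G.Walk a b} :
    IsBFSDescending G r p ↔ G.dist r a = G.dist r b + p.length := by
  induction p with
  | nil => simp
  | @cons a c b h q ih =>
    have hca : G.dist c a ≤ 1 := by simpa using dist_le (Walk.cons h.symm Walk.nil)
    have hac := h.symm.reachable.dist_triangle_right r
    have hcb : G.dist r c ≤ G.dist r b + q.length :=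
      (q.reverse.reachable.dist_triangle_right r).trans
        (Nat.add_le_add_left ((dist_le q.reverse).trans_eq q.length_reverse) _)
    rw [isBFSDescending_cons, ih, Walk.length_cons]
    exact ⟨fun ⟨hstep, hq⟩ => by rw [hstep.2, hq]; ring,
      fun h' => ⟨⟨h.symm, by omega⟩, by omega⟩⟩

lemma IsBFSDescending.bfsReach {a b x : V} {p : G.Walk a b} (hp : IsBFSDescending G r p)
    (hx : x ∈ p.support) : BFSReach G r a x := by
  induction p with
  | nil =>
    rw [Walk.support_nil, List.mem_singleton] at hx
    exact hx ▸ .refl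
  | cons h q ih =>
    rw [isBFSDescending_cons] at hp
    rcases List.mem_cons.1 (Walk.support_cons h q ▸ hx) with rfl | hx
    · exact .refl
    · exact .head hp.1 (ih hp.2 hx)

lemma IsBFSDescending.isChain_support {a b : V} {p : G.Walk a b} (hp : IsBFSDescending G r p) :
    IsChain (BFSReach G r) {x | x ∈ p.support} := by
  induction p with
  | nil => simp
  | @cons u v w h q ih =>
    have hsupp : {x | x ∈ (Walk.cons h q).support} = insert u {x | x ∈ q.support} := by
      ext; simp
    rw [hsupp]
    exact (ih ((isBFSDescending_cons h q).1 hp).2).insert fun x hx _ =>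
      .inl (hp.bfsReach (List.mem_cons_of_mem u hx))

lemma IsBFSDescending.isPath {a b : V} {p : G.Walk a b} (hp : IsBFSDescending G r p) :
    p.IsPath := by
  induction p with
  | nil => exact .nil
  | cons h q ih =>
    rw [isBFSDescending_cons] at hp
    refine (ih hp.2).cons fun ha => ?_
    have := (hp.2.bfsReach ha).dist_le
    have := hp.1.2
    omega

lemma BFSReach.exists_isBFSDescending {a b : V} (h : BFSReach G r a b) :
    ∃ p : G.Walk a b, IsBFSDescending G r p := by
  induction h with
  | refl => exact ⟨.nil, isBFSDescending_nil⟩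
  | tail _ hstep ih =>
    obtain ⟨p, hp⟩ := ih
    exact ⟨p.concat hstep.1.symm, hp.append (by simpa using hstep)⟩

lemma IsometricPath.isBFSDescending_reverse {w : V} {Q : G.Walk r w} (hQ : IsometricPath G Q) :
    IsBFSDescending G r Q.reverse := by
  rw [isBFSDescending_iff_dist_eq, Walk.length_reverse, hQ.2]
  simp

lemma IsBFSDescending.isometricPath_reverse {a : V} {p : G.Walk a r}
    (hp : IsBFSDescending G r p) : IsometricPath G p.reverse :=
  ⟨hp.isPath.reverse, by simpa [dist_comm] using (isBFSDescending_iff_dist_eq.1 hp).symm⟩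

lemma IsometricPath.isChain_support {w : V} {Q : G.Walk r w} (hQ : IsometricPath G Q) :
    IsChain (BFSReach G r) {x | x ∈ Q.support} := by
  simpa using hQ.isBFSDescending_reverse.isChain_support

lemma exists_isBFSDescending_of_isChain (hG : G.Connected) {C : Finset V}
    (hC : IsChain (BFSReach G r) (C : Set V)) {t : V} (ht : ∀ x ∈ C, BFSReach G r t x) :
    ∃ p : G.Walk t r, IsBFSDescending G r p ∧ ∀ x ∈ C, x ∈ p.support := by
  classical
  induction C using Finset.induction_on_max_value (G.dist r) generalizing t with
  | empty =>
    obtain ⟨p, hp⟩ := hG.exists_walk_length_eq_dist t r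
    exact ⟨p, isBFSDescending_iff_dist_eq.2 (by simp [hp, dist_comm]), by simp⟩
  | insert a C haC hmax ih =>
    rw [coe_insert] at hC
    have ha : ∀ x ∈ C, BFSReach G r a x := fun x hx =>
      .of_isChain_of_dist_le hC (Set.mem_insert a _) (Set.mem_insert_of_mem a hx) (hmax x hx)
    obtain ⟨q, hq, hqC⟩ := ih (hC.mono (Set.subset_insert a _)) ha
    obtain ⟨p, hp⟩ := (ht a (mem_insert_self a C)).exists_isBFSDescending
    refine ⟨p.append q, hp.append hq, ?_⟩
    simp only [mem_insert, forall_eq_or_imp, Walk.mem_support_append_iff]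
    exact ⟨.inr q.start_mem_support, fun x hx => .inr (hqC x hx)⟩

lemma exists_isometricPath_of_isChain (hG : G.Connected) {C : Finset V}
    (hC : IsChain (BFSReach G r) (C : Set V)) :
    ∃ (w : V) (Q : G.Walk r w), IsometricPath G Q ∧ ∀ x ∈ C, x ∈ Q.support := by
  obtain ⟨t, ht⟩ : ∃ t, ∀ x ∈ C, BFSReach G r t x := by
    rcases C.eq_empty_or_nonempty with rfl | hne
    · exact ⟨r, by simp⟩
    obtain ⟨t, htC, htmax⟩ := C.exists_max_image (G.dist r) hne
    exact ⟨t, fun x hx => .of_isChain_of_dist_le hC htC hx (htmax x hx)⟩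
  obtain ⟨p, hp, hpC⟩ := exists_isBFSDescending_of_isChain hG hC ht
  exact ⟨t, p.reverse, hp.isometricPath_reverse, fun x hx => by simpa using hpC x hx⟩

end BFSDescent

theorem exists_rooted_isometricPath_cover_iff {G : SimpleGraph V} (hG : G.Connected) (r : V)
    (s : Finset V) (k : ℕ) :
    (∃ Q : Fin k → Σ w : V, G.Walk r w,
      (∀ i, IsometricPath G (Q i).2) ∧ ∀ x ∈ s, ∃ i, x ∈ (Q i).2.support) ↔
      ∀ A ⊆ s, IsBFSAntichain G r A → #A ≤ k := by
  constructor
  · rintro ⟨Q, hQ, hcov⟩ A hAs hA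
    simpa using IsAntichain.card_le_card_of_forall_exists_isChain (R := BFSReach G r)
      (I := univ) (c := fun i => {x | x ∈ (Q i).2.support}) (fun a ha b hb hab => hA a ha b hb hab)
      (fun i _ => (hQ i).isChain_support) fun x hx => by simpa using hcov x (hAs hx)
  · intro hk
    let := bfsReachOrder G r
    obtain ⟨c, hc, hcov⟩ :=
      s.exists_isChain_cover fun A hAs hA => hk A hAs fun a ha b hb hab => hA ha hb hab
    choose w Q hQ hQc using fun i => exists_isometricPath_of_isChain hG (hc i)
    exact ⟨fun i => ⟨w i, Q i⟩, hQ, fun x hx => (hcov x hx).imp fun i hi => hQc i x hi⟩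

theorem ipcoR_eq_maxPathAntichain_general (G : SimpleGraph V) (hG : G.Connected)
    (r : V) : ipcoR G r = maxPathAntichain G r := by
  classical
  rw [ipcoR, maxPathAntichain, ← Nat.sInf_upperBounds]
  congr 1
  ext k
  simp only [RootedCover, Set.mem_ofPred_eq, mem_upperBounds, forall_exists_index, and_imp]
  refine ⟨fun hk n u v p A hp hAp hA hn => ?_, fun hk u v p hp => ?_⟩
  · obtain ⟨Q, hQ, hcov⟩ := hk p hp
    exact hn ▸ (exists_rooted_isometricPath_cover_iff hG r p.support.toFinset k).1
      ⟨Q, hQ, fun x hx => hcov x (List.mem_toFinset.1 hx)⟩ A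
      (fun a ha => List.mem_toFinset.2 (hAp a ha)) hA
  · obtain ⟨Q, hQ, hcov⟩ := (exists_rooted_isometricPath_cover_iff hG r p.support.toFinset k).2
      fun A hA hAc => hk _ u v p A hp (fun a ha => List.mem_toFinset.1 (hA ha)) hAc rfl
    exact ⟨Q, hQ, fun x hx => hcov x (List.mem_toFinset.2 hx)⟩

/-- For any connected graph `G` and any vertex `r`, the minimum number of
`r`-rooted isometric paths needed to cover the vertices of any isometric path of `G`
equals the maximum size of an antichain of an isometric path in the BFS-DAG rooted at `r`. -/
theorem ipcoR_eq_maxPathAntichain [Fintype V] (G : SimpleGraph V) (hG : G.Connected)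
    (r : V) : ipcoR G r = maxPathAntichain G r :=
  ipcoR_eq_maxPathAntichain_general G hG r
end

section
/- For every integer t ≥ 1, if a graph class does not contain K_{2,t} as an asymptotic minor, then it does not contain U_t as an asymptotic minor, where U_t is the graph obtained from a path on t vertices by adding a universal vertex. Concretely: if for every K ≥ 12 some graph G in the class contains a K-fat minor model of U_t, then G contains a ⌊K/4⌋-fat minor model of K_{2,t}. -/
open SimpleGraph

variable {V : Type*} {W : Type*}

/-- A `K`-fat minor model of `H` in `G`: connected branch sets `B w` for the vertices of
`H` and connected branch paths `P u v` for the edges of `H`, such that a branch set and a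
branch path meet whenever they are incident, and any other pair among these subgraphs is
at distance at least `K` in `G`. -/
structure FatMinorModel (G : SimpleGraph V) (H : SimpleGraph W) (K : ℕ) where
  B : W → Set V
  P : W → W → Set V
  Psymm : ∀ u v, P u v = P v u
  Bnonempty : ∀ w, (B w).Nonempty
  Bconnected : ∀ w, (G.induce (B w)).Connected
  Pconnected : ∀ ⦃u v⦄, H.Adj u v → (G.induce (P u v)).Connected
  meets : ∀ ⦃u v⦄, H.Adj u v → (B u ∩ P u v).Nonempty
  far_BB : ∀ ⦃u v⦄, u ≠ v → ∀ x ∈ B u, ∀ y ∈ B v, (K : ℕ∞) ≤ G.edist x y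
  far_BP : ∀ ⦃u v w⦄, H.Adj u v → w ≠ u → w ≠ v →
    ∀ x ∈ B w, ∀ y ∈ P u v, (K : ℕ∞) ≤ G.edist x y
  far_PP : ∀ ⦃u v u' v'⦄, H.Adj u v → H.Adj u' v' → s(u, v) ≠ s(u', v') →
    ∀ x ∈ P u v, ∀ y ∈ P u' v', (K : ℕ∞) ≤ G.edist x y

/-- `Ugraph t`: the graph obtained from a path on `t` vertices (the vertices `some i`,
consecutive ones adjacent) by adding a universal vertex `none`. -/
def Ugraph (t : ℕ) : SimpleGraph (Option (Fin t)) :=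
  SimpleGraph.fromRel (fun a b =>
    a = none ∨ ∃ i j : Fin t, a = some i ∧ b = some j ∧ (i : ℕ) + 1 = (j : ℕ))

/-!
Let `m = ⌊K/4⌋`. In a `K`-fat model of `U_t`, walk along the branch path from the hub `B none` to
the `i`-th path vertex `B (some i)`: a discrete intermediate value argument cuts out a segment that
stays at distance `≥ 2m` from the hub and `≥ m` from `B (some i)`, its ends being at distance
exactly `2m` and `m`. These segments are the branch sets of the `t`-side of `K_{2,t}`, and geodesics
from their ends give the branch paths, except that the last `m` steps of each geodesic towards the
hub are added to the hub. The two remaining branch sets are this enlarged hub and the union of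
everything modelling the path of `U_t`. Every new set lies within `m` or `2m` of an old one, so all
separations follow from the fatness of the `U_t` model by the triangle inequality.
-/

namespace SimpleGraph

variable {G : SimpleGraph V}

noncomputable def infEdist (G : SimpleGraph V) (x : V) (s : Set V) : ℕ∞ :=
  ⨅ y ∈ s, G.edist x y

def cthickening (G : SimpleGraph V) (r : ℕ) (s : Set V) : Set V :=
  {x | G.infEdist x s ≤ r}

def FarApart (G : SimpleGraph V) (k : ℕ) (s t : Set V) : Prop :=
  ∀ x ∈ s, ∀ y ∈ t, (k : ℕ∞) ≤ G.edist x y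

section infEdist

variable {s : Set V} {x y : V}

lemma infEdist_le_edist (hy : y ∈ s) : G.infEdist x s ≤ G.edist x y :=
  iInf₂_le y hy

lemma le_infEdist {c : ℕ∞} : c ≤ G.infEdist x s ↔ ∀ y ∈ s, c ≤ G.edist x y :=
  le_iInf₂_iff

@[simp]
lemma infEdist_empty : G.infEdist x ∅ = ⊤ := by
  simp [infEdist]

lemma exists_edist_eq_infEdist (hs : s.Nonempty) : ∃ y ∈ s, G.edist x y = G.infEdist x s := by
  have : Nonempty s := hs.to_subtype
  obtain ⟨⟨y, hy⟩, hxy⟩ := ciInf_mem fun y : s => G.edist x y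
  exact ⟨y, hy, by rw [infEdist, iInf_subtype']; exact hxy⟩

lemma infEdist_le_infEdist_add_edist : G.infEdist x s ≤ G.infEdist y s + G.edist x y := by
  rcases s.eq_empty_or_nonempty with rfl | hs
  · simp
  obtain ⟨w, hw, hyw⟩ := G.exists_edist_eq_infEdist (x := y) hs
  rw [← hyw, add_comm]
  exact (infEdist_le_edist hw).trans SimpleGraph.edist_triangle

lemma exists_walk_length_eq_infEdist {n : ℕ} (h : G.infEdist x s = n) :
    ∃ y ∈ s, ∃ p : G.Walk x y, p.length = n := by
  obtain ⟨y, hy, hxy⟩ := G.exists_edist_eq_infEdist (x := x) (s := s)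
    (Set.nonempty_iff_ne_empty.2 fun hs => by simp [hs] at h)
  obtain ⟨p, hp⟩ := exists_walk_of_edist_eq_coe (hxy.trans h)
  exact ⟨y, hy, p, hp⟩

lemma mem_cthickening_of_edist_le {r : ℕ} (hy : y ∈ s) (h : G.edist x y ≤ r) :
    x ∈ G.cthickening r s :=
  (infEdist_le_edist hy).trans h

lemma subset_cthickening (r : ℕ) : s ⊆ G.cthickening r s := fun x hx =>
  mem_cthickening_of_edist_le hx (by simp)

lemma exists_edist_le_of_mem_cthickening {r : ℕ} (hx : x ∈ G.cthickening r s) :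
    ∃ y ∈ s, G.edist x y ≤ r := by
  obtain ⟨y, hy, hxy⟩ := G.exists_edist_eq_infEdist (x := x) (s := s)
    (Set.nonempty_iff_ne_empty.2 fun hs => by simp [cthickening, hs] at hx)
  exact ⟨y, hy, hxy ▸ hx⟩

end infEdist

namespace FarApart

variable {k c a b : ℕ} {s t s' t' R R' : Set V} {y : V}

lemma symm (h : G.FarApart k s t) : G.FarApart k t s := fun x hx y hy =>
  edist_comm (G := G) ▸ h y hy x hx

lemma mono {k' : ℕ} (h : G.FarApart k s t) (hk : k' ≤ k) (hs : s' ⊆ s) (ht : t' ⊆ t) :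
    G.FarApart k' s' t' := fun x hx y hy =>
  (Nat.cast_le.2 hk).trans (h x (hs hx) y (ht hy))

lemma of_le_infEdist (h : ∀ y ∈ t, (k : ℕ∞) ≤ G.infEdist y s) : G.FarApart k s t :=
  fun x hx y hy => edist_comm (G := G) ▸ le_infEdist.1 (h y hy) x hx

lemma le_infEdist (h : G.FarApart k s t) (hy : y ∈ t) : (k : ℕ∞) ≤ G.infEdist y s :=
  SimpleGraph.le_infEdist.2 fun x hx => edist_comm (G := G) ▸ h x hx y hy

lemma cthickening_left (h : G.FarApart (a + c) R t) : G.FarApart c (G.cthickening a R) t := by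
  intro x hx y hy
  obtain ⟨w, hw, hxw⟩ := exists_edist_le_of_mem_cthickening hx
  refine (ENat.add_le_add_iff_left (ENat.natCast_ne_top a)).1 ?_
  calc (a : ℕ∞) + c = ((a + c : ℕ) : ℕ∞) := by push_cast; rfl
    _ ≤ G.edist w y := h w hw y hy
    _ ≤ G.edist w x + G.edist x y := SimpleGraph.edist_triangle
    _ ≤ a + G.edist x y := by rw [edist_comm]; gcongr

lemma of_subset_cthickening_left (h : G.FarApart k R t) (hs : s ⊆ G.cthickening a R)
    (hk : a + c ≤ k) : G.FarApart c s t :=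
  (h.mono hk subset_rfl subset_rfl).cthickening_left.mono le_rfl hs subset_rfl

lemma of_subset_cthickening (h : G.FarApart k R R') (hs : s ⊆ G.cthickening a R)
    (ht : t ⊆ G.cthickening b R') (hk : a + b + c ≤ k) : G.FarApart c s t :=
  ((h.symm.of_subset_cthickening_left ht (c := a + c) (by omega)).symm.of_subset_cthickening_left
    hs le_rfl)

end FarApart

namespace Walk

variable {u v x : V}

lemma edist_start_le_length (p : G.Walk u v) (hx : x ∈ p.support) : G.edist u x ≤ p.length := by
  classical
  exact (edist_le (p.takeUntil x hx)).trans (by exact_mod_cast p.length_takeUntil_le_length hx)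

lemma edist_end_le_length (p : G.Walk u v) (hx : x ∈ p.support) : G.edist x v ≤ p.length := by
  classical
  exact (edist_le (p.dropUntil x hx)).trans (by exact_mod_cast p.length_dropUntil_le_length hx)

lemma edist_getVert_succ_le_one (p : G.Walk u v) (k : ℕ) :
    G.edist (p.getVert k) (p.getVert (k + 1)) ≤ 1 := by
  rcases lt_or_ge k p.length with hk | hk
  · exact edist_le_one_iff_adj_or_eq.2 (.inl (p.adj_getVert_succ hk))
  · rw [p.getVert_of_length_le hk, p.getVert_of_length_le (by omega), edist_self]
    exact zero_le_one

lemma infEdist_getVert_succ_le (p : G.Walk u v) (k : ℕ) (s : Set V) :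
    G.infEdist (p.getVert (k + 1)) s ≤ G.infEdist (p.getVert k) s + 1 := by
  refine (infEdist_le_infEdist_add_edist (y := p.getVert k)).trans ?_
  rw [edist_comm]
  gcongr
  exact p.edist_getVert_succ_le_one k

lemma infEdist_getVert_le_succ (p : G.Walk u v) (k : ℕ) (s : Set V) :
    G.infEdist (p.getVert k) s ≤ G.infEdist (p.getVert (k + 1)) s + 1 := by
  refine (infEdist_le_infEdist_add_edist (y := p.getVert (k + 1))).trans ?_
  gcongr
  exact p.edist_getVert_succ_le_one k

lemma mem_support_of_mem_support_take {n : ℕ} (p : G.Walk u v) (hx : x ∈ (p.take n).support) :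
    x ∈ p.support := by
  rw [support_take] at hx
  exact List.mem_of_mem_take hx

lemma exists_getVert_eq_of_mem_support_take_drop {y : V} (p : G.Walk u v) {j n : ℕ}
    (hy : y ∈ ((p.drop j).take n).support) : ∃ i, j ≤ i ∧ i ≤ j + n ∧ p.getVert i = y := by
  obtain ⟨k, rfl, -⟩ := Walk.mem_support_iff_exists_getVert.1 hy
  exact ⟨j + min n k, by omega, by omega, by simp⟩

end Walk

lemma Preconnected.exists_walk_support_subset {s : Set V} (h : (G.induce s).Preconnected)
    {x y : V} (hx : x ∈ s) (hy : y ∈ s) : ∃ p : G.Walk x y, ∀ v ∈ p.support, v ∈ s := by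
  obtain ⟨q⟩ := h ⟨x, hx⟩ ⟨y, hy⟩
  have hq : ∀ v ∈ (q.map (Embedding.induce s).toHom).support, v ∈ s := by
    intro v hv
    rw [Walk.support_map (Embedding.induce s).toHom q] at hv
    simp only [List.mem_map] at hv
    obtain ⟨w, -, rfl⟩ := hv
    exact w.2
  exact ⟨_, hq⟩

lemma connected_induce_union_iUnion {ι : Type*} {s : Set V} {t : ι → Set V}
    (hs : (G.induce s).Connected) (ht : ∀ i, (G.induce (t i)).Connected)
    (hst : ∀ i, (s ∩ t i).Nonempty) : (G.induce (s ∪ ⋃ i, t i)).Connected := by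
  obtain ⟨u, hu⟩ := Set.nonempty_coe_sort.1 hs.nonempty
  refine induce_connected_of_patches u (.inl hu) fun {v} hv => ?_
  rcases hv with hv | hv
  · exact ⟨s, Set.subset_union_left, hu, hv, hs.preconnected _ _⟩
  obtain ⟨i, hv⟩ := Set.mem_iUnion.1 hv
  refine ⟨s ∪ t i, Set.union_subset_union_right _ (Set.subset_iUnion t i), .inl hu, .inr hv,
    (induce_union_connected hs.preconnected (ht i).preconnected (hst i)).preconnected _ _⟩

end SimpleGraph

namespace ENat

variable {f : ℕ → ℕ∞} {a N : ℕ}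

lemma exists_last_eq_of_le_add_one (hstep : ∀ k, f (k + 1) ≤ f k + 1) (h0 : f 0 ≤ a)
    (hN : (a : ℕ∞) < f N) : ∃ j < N, f j = a ∧ ∀ k, j < k → k ≤ N → (a : ℕ∞) < f k := by
  classical
  set j := Nat.findGreatest (fun k => f k ≤ a) N
  have hj : f j ≤ a := Nat.findGreatest_spec (P := fun k => f k ≤ a) N.zero_le h0
  have hjN : j < N := (Nat.findGreatest_le N).lt_of_ne fun h => hN.not_ge (h ▸ hj)
  have hgt : ∀ k, j < k → k ≤ N → (a : ℕ∞) < f k := fun k hjk hkN =>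
    lt_of_not_ge (Nat.findGreatest_is_greatest hjk hkN)
  refine ⟨j, hjN, hj.antisymm ?_, hgt⟩
  exact (ENat.lt_add_one_iff (ne_top_of_le_ne_top (natCast_ne_top a) hj)).1
    ((hgt (j + 1) j.lt_succ_self hjN).trans_le (hstep j))

lemma exists_first_eq_of_le_add_one (hstep : ∀ k, f k ≤ f (k + 1) + 1) (h0 : (a : ℕ∞) < f 0)
    (hN : f N ≤ a) : ∃ z ≤ N, f z = a ∧ ∀ k < z, (a : ℕ∞) < f k := by
  classical
  have hex : ∃ k, f k ≤ a := ⟨N, hN⟩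
  set z := Nat.find hex
  have hz : f z ≤ a := Nat.find_spec hex
  have hlt : ∀ k < z, (a : ℕ∞) < f k := fun k hk => lt_of_not_ge (Nat.find_min hex hk)
  have hz0 : z ≠ 0 := fun h => h0.not_ge (h ▸ hz)
  refine ⟨z, Nat.find_min' hex hN, hz.antisymm ?_, hlt⟩
  have hstep' := hstep (z - 1)
  rw [Nat.sub_add_cancel (Nat.one_le_iff_ne_zero.2 hz0)] at hstep'
  exact (ENat.lt_add_one_iff (ne_top_of_le_ne_top (natCast_ne_top a) hz)).1
    ((hlt (z - 1) (by omega)).trans_le hstep')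

end ENat

namespace SimpleGraph

variable {G : SimpleGraph V} {hub tip spoke : Set V} {K m : ℕ}

lemma exists_spoke_segment (hS : (G.induce spoke).Connected)
    (hhub : (hub ∩ spoke).Nonempty) (htip : (tip ∩ spoke).Nonempty) (hfar : G.FarApart K hub tip)
    (hm : 0 < m) (hK : 4 * m ≤ K) :
    ∃ (c d : V) (q : G.Walk c d), (∀ y ∈ q.support, y ∈ spoke) ∧
      G.infEdist c hub = ↑(2 * m) ∧ G.infEdist d tip = m ∧
      G.FarApart (2 * m) hub {y | y ∈ q.support} ∧ G.FarApart m tip {y | y ∈ q.support} := by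
  obtain ⟨x₀, hx₀, hx₀S⟩ := hhub
  obtain ⟨x₁, hx₁, hx₁S⟩ := htip
  obtain ⟨W, hW⟩ := hS.preconnected.exists_walk_support_subset hx₀S hx₁S
  set f : ℕ → ℕ∞ := fun k => G.infEdist (W.getVert k) hub
  set g : ℕ → ℕ∞ := fun k => G.infEdist (W.getVert k) tip
  -- `z` is the first vertex of the walk within `m` of `tip`, and `j` the last one before `z`
  -- within `2m` of `hub`; the segment between them is far from both.
  obtain ⟨z, -, hgz, hgt⟩ := ENat.exists_first_eq_of_le_add_one (f := g) (a := m)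
    (N := W.length) (fun k => W.infEdist_getVert_le_succ k tip)
    (by simpa [g] using (Nat.cast_lt.2 (by omega)).trans_le (hfar.symm.le_infEdist hx₀))
    (by simpa [g] using (infEdist_le_edist hx₁).trans (by simp))
  have hfz : ((2 * m : ℕ) : ℕ∞) < f z := by
    have hz : {W.getVert z} ⊆ G.cthickening m tip := by simpa [cthickening, g] using hgz.le
    exact (Nat.cast_lt.2 (by omega)).trans_le
      ((hfar.symm.of_subset_cthickening_left hz (c := 3 * m) (by omega)).symm.le_infEdist rfl)
  obtain ⟨j, hjz, hfj, hft⟩ := ENat.exists_last_eq_of_le_add_one (f := f) (a := 2 * m)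
    (fun k => W.infEdist_getVert_succ_le k hub)
    (by simpa [f] using (infEdist_le_edist hx₀).trans (by simp)) hfz
  refine ⟨W.getVert j, (W.drop j).getVert (z - j), (W.drop j).take (z - j), fun y hy => ?_, hfj,
    by rw [W.drop_getVert, Nat.add_sub_cancel' hjz.le]; exact hgz,
    .of_le_infEdist fun y hy => ?_, .of_le_infEdist fun y hy => ?_⟩ <;>
  obtain ⟨i, hji, hiz, rfl⟩ := W.exists_getVert_eq_of_mem_support_take_drop hy
  · exact hW _ (W.getVert_mem_support i)
  · rcases hji.eq_or_lt with rfl | hji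
    · exact hfj.ge
    · exact (hft i hji (by omega)).le
  · rcases (show i ≤ z by omega).lt_or_eq with hiz | rfl
    · exact (hgt i hiz).le
    · exact hgz.ge

/-- `core` becomes the branch set of a vertex on the `t`-side of `K_{2,t}` and `link a` its branch
path to vertex `a` of the other side; `tail` is absorbed into the branch set of vertex `0`. -/
structure SpokeSplit (G : SimpleGraph V) (hub tip spoke : Set V) (m : ℕ) where
  core : Set V
  link : Fin 2 → Set V
  tail : Set V
  core_subset : core ⊆ spoke
  core_connected : (G.induce core).Connected
  link_connected : ∀ a, (G.induce (link a)).Connected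
  tail_connected : (G.induce tail).Connected
  core_meets_link : ∀ a, (core ∩ link a).Nonempty
  hub_meets_tail : (hub ∩ tail).Nonempty
  tail_meets_link : (tail ∩ link 0).Nonempty
  tip_meets_link : (tip ∩ link 1).Nonempty
  link_subset_cthickening : ∀ a, link a ⊆ G.cthickening m spoke
  tail_subset_cthickening : tail ⊆ G.cthickening m hub
  link_zero_subset_cthickening : link 0 ⊆ G.cthickening (2 * m) hub
  farApart_hub_core : G.FarApart (2 * m) hub core
  farApart_tip_core : G.FarApart m tip core
  farApart_hub_link_one : G.FarApart (3 * m) hub (link 1)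

lemma nonempty_spokeSplit (hS : (G.induce spoke).Connected)
    (hhub : (hub ∩ spoke).Nonempty) (htip : (tip ∩ spoke).Nonempty) (hfar : G.FarApart K hub tip)
    (hm : 0 < m) (hK : 4 * m ≤ K) : Nonempty (G.SpokeSplit hub tip spoke m) := by
  obtain ⟨c, d, q, hq, hc, hd, hcore_hub, hcore_tip⟩ :=
    exists_spoke_segment hS hhub htip hfar hm hK
  obtain ⟨w₀, hw₀, γ, hγ⟩ := exists_walk_length_eq_infEdist hc
  obtain ⟨w₁, hw₁, δ, hδ⟩ := exists_walk_length_eq_infEdist hd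
  have hδtip : {y | y ∈ δ.support} ⊆ G.cthickening m tip := fun y hy =>
    mem_cthickening_of_edist_le hw₁ (hδ ▸ δ.edist_end_le_length hy)
  refine ⟨{
    core := {y | y ∈ q.support}
    link := ![{y | y ∈ (γ.take m).support}, {y | y ∈ δ.support}]
    tail := {y | y ∈ (γ.drop m).support}
    core_subset := hq
    core_connected := q.connected_induce_support
    link_connected := ?_
    tail_connected := (γ.drop m).connected_induce_support
    core_meets_link := ?_
    hub_meets_tail := ⟨w₀, hw₀, (γ.drop m).end_mem_support⟩
    tail_meets_link := ⟨γ.getVert m, (γ.drop m).start_mem_support, (γ.take m).end_mem_support⟩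
    tip_meets_link := ⟨w₁, hw₁, δ.end_mem_support⟩
    link_subset_cthickening := ?_
    tail_subset_cthickening := fun y hy => mem_cthickening_of_edist_le hw₀
      (((γ.drop m).edist_end_le_length hy).trans (by simp [hγ, two_mul]))
    link_zero_subset_cthickening := fun y hy => mem_cthickening_of_edist_le hw₀
      (hγ ▸ γ.edist_end_le_length (γ.mem_support_of_mem_support_take hy))
    farApart_hub_core := hcore_hub
    farApart_tip_core := hcore_tip
    farApart_hub_link_one := (hfar.symm.of_subset_cthickening_left hδtip (by omega)).symm }⟩
  · intro a
    fin_cases a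
    exacts [(γ.take m).connected_induce_support, δ.connected_induce_support]
  · intro a
    fin_cases a
    exacts [⟨c, q.start_mem_support, (γ.take m).start_mem_support⟩,
      ⟨d, q.end_mem_support, δ.start_mem_support⟩]
  · intro a y hy
    fin_cases a
    · refine mem_cthickening_of_edist_le (hq c q.start_mem_support) ?_
      rw [edist_comm]
      exact ((γ.take m).edist_start_le_length hy).trans (by simp)
    · refine mem_cthickening_of_edist_le (hq d q.end_mem_support) ?_
      rw [edist_comm]
      exact hδ ▸ δ.edist_start_le_length hy

end SimpleGraph

namespace FatMinorModel

variable {G : SimpleGraph V} {H : SimpleGraph W} {K : ℕ}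

section BranchUnion

variable {W' : Type*} {H' : SimpleGraph W'}

def branchUnion (M : FatMinorModel G H K) (f : H' →g H) : Set V :=
  (⋃ w, M.B (f w)) ∪ ⋃ u, ⋃ v, ⋃ (_ : H'.Adj u v), M.P (f u) (f v)

variable (M : FatMinorModel G H K) (f : H' →g H)

lemma B_subset_branchUnion (w : W') : M.B (f w) ⊆ M.branchUnion f :=
  Set.subset_union_of_subset_left (Set.subset_iUnion (fun w => M.B (f w)) w) _

lemma P_subset_branchUnion {u v : W'} (h : H'.Adj u v) : M.P (f u) (f v) ⊆ M.branchUnion f :=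
  fun _ hx => .inr (Set.mem_iUnion₂.2 ⟨u, v, Set.mem_iUnion.2 ⟨h, hx⟩⟩)

lemma connected_induce_B_union_P {u v : W} (h : H.Adj u v) :
    (G.induce (M.B u ∪ M.P u v)).Connected :=
  induce_union_connected (M.Bconnected u).preconnected (M.Pconnected h).preconnected (M.meets h)

lemma exists_connected_subset_branchUnion {u v : W'} (p : H'.Walk u v) :
    ∃ s ⊆ M.branchUnion f, (G.induce s).Connected ∧ M.B (f u) ⊆ s ∧ M.B (f v) ⊆ s := by
  induction p with
  | nil => exact ⟨_, M.B_subset_branchUnion f _, M.Bconnected _, subset_rfl, subset_rfl⟩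
  | @cons u u' v h p ih =>
    obtain ⟨s, hsU, hs, hu's, hvs⟩ := ih
    have hadj := f.map_adj h
    have hlink : (G.induce (M.B (f u) ∪ M.P (f u) (f u'))).Connected :=
      M.connected_induce_B_union_P hadj
    have hmeet : (s ∩ (M.B (f u) ∪ M.P (f u) (f u'))).Nonempty := by
      obtain ⟨x, hxB, hxP⟩ := M.meets hadj.symm
      exact ⟨x, hu's hxB, .inr (M.Psymm _ _ ▸ hxP)⟩
    exact ⟨s ∪ (M.B (f u) ∪ M.P (f u) (f u')),
      Set.union_subset hsU (Set.union_subset (M.B_subset_branchUnion f u)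
        (M.P_subset_branchUnion f h)),
      induce_union_connected hs.preconnected hlink.preconnected hmeet,
      Set.subset_union_of_subset_right Set.subset_union_left _,
      Set.subset_union_of_subset_left hvs _⟩

lemma connected_induce_branchUnion (hH' : H'.Connected) :
    (G.induce (M.branchUnion f)).Connected := by
  obtain ⟨w₀⟩ := hH'.nonempty
  obtain ⟨b, hb⟩ := M.Bnonempty (f w₀)
  refine induce_connected_of_patches b (M.B_subset_branchUnion f w₀ hb) fun {x} hx => ?_
  rcases hx with hx | hx
  · obtain ⟨w, hx⟩ := Set.mem_iUnion.1 hx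
    obtain ⟨s, hsU, hs, hw₀s, hws⟩ := M.exists_connected_subset_branchUnion f (hH' w₀ w).some
    exact ⟨s, hsU, hw₀s hb, hws hx, hs.preconnected _ _⟩
  · simp only [Set.mem_iUnion] at hx
    obtain ⟨u, v, h, hx⟩ := hx
    obtain ⟨s, hsU, hs, hw₀s, hus⟩ := M.exists_connected_subset_branchUnion f (hH' w₀ u).some
    have hmeet : (s ∩ (M.B (f u) ∪ M.P (f u) (f v))).Nonempty := by
      obtain ⟨y, hyB, -⟩ := M.meets (f.map_adj h)
      exact ⟨y, hus hyB, .inl hyB⟩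
    exact ⟨s ∪ (M.B (f u) ∪ M.P (f u) (f v)),
      Set.union_subset hsU (Set.union_subset (M.B_subset_branchUnion f u)
        (M.P_subset_branchUnion f h)), .inl (hw₀s hb), .inr (.inr hx),
      (induce_union_connected hs.preconnected
        (M.connected_induce_B_union_P (f.map_adj h)).preconnected hmeet).preconnected _ _⟩

end BranchUnion

variable {G : SimpleGraph V} {α β : Type*} {k : ℕ}

def bipartiteLinks (Q : α → β → Set V) : α ⊕ β → α ⊕ β → Set V
  | .inl a, .inr i => Q a i
  | .inr i, .inl a => Q a i
  | _, _ => ∅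

lemma exists_eq_of_completeBipartiteGraph_adj {u v : α ⊕ β}
    (h : (completeBipartiteGraph α β).Adj u v) :
    ∃ a i, u = .inl a ∧ v = .inr i ∨ u = .inr i ∧ v = .inl a := by
  rcases u with a | i <;> rcases v with b | j <;> simp at h
  exacts [⟨a, j, .inl ⟨rfl, rfl⟩⟩, ⟨b, i, .inr ⟨rfl, rfl⟩⟩]

variable (A : α → Set V) (C : β → Set V) (Q : α → β → Set V)

def ofCompleteBipartite
    (hA : ∀ a, (G.induce (A a)).Connected) (hC : ∀ i, (G.induce (C i)).Connected)
    (hQ : ∀ a i, (G.induce (Q a i)).Connected)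
    (hAQ : ∀ a i, (A a ∩ Q a i).Nonempty) (hCQ : ∀ a i, (C i ∩ Q a i).Nonempty)
    (farAA : Pairwise fun a b => G.FarApart k (A a) (A b))
    (farCC : Pairwise fun i j => G.FarApart k (C i) (C j))
    (farAC : ∀ a i, G.FarApart k (A a) (C i))
    (farAQ : ∀ a b i, a ≠ b → G.FarApart k (A a) (Q b i))
    (farCQ : ∀ a i j, i ≠ j → G.FarApart k (C i) (Q a j))
    (farQQ : ∀ a i b j, (a, i) ≠ (b, j) → G.FarApart k (Q a i) (Q b j)) :
    FatMinorModel G (completeBipartiteGraph α β) k where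
  B := Sum.elim A C
  P := bipartiteLinks Q
  Psymm := by rintro (a | i) (b | j) <;> rfl
  Bnonempty := by
    rintro (a | i)
    exacts [Set.nonempty_coe_sort.1 (hA a).nonempty, Set.nonempty_coe_sort.1 (hC i).nonempty]
  Bconnected := by
    rintro (a | i)
    exacts [hA a, hC i]
  Pconnected := by
    intro u v h
    obtain ⟨a, i, ⟨rfl, rfl⟩ | ⟨rfl, rfl⟩⟩ := exists_eq_of_completeBipartiteGraph_adj h <;>
      exact hQ a i
  meets := by
    intro u v h
    obtain ⟨a, i, ⟨rfl, rfl⟩ | ⟨rfl, rfl⟩⟩ := exists_eq_of_completeBipartiteGraph_adj h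
    exacts [hAQ a i, hCQ a i]
  far_BB := by
    rintro (a | i) (b | j) h
    exacts [farAA fun hab => h (hab ▸ rfl), farAC a j, (farAC b i).symm,
      farCC fun hij => h (hij ▸ rfl)]
  far_BP := by
    have farBQ : ∀ w a i, w ≠ .inl a → w ≠ .inr i → G.FarApart k (Sum.elim A C w) (Q a i) := by
      rintro (b | j) a i hwa hwi
      exacts [farAQ b a i fun h => hwa (h ▸ rfl), farCQ a j i fun h => hwi (h ▸ rfl)]
    intro u v w h hwu hwv
    obtain ⟨a, i, ⟨rfl, rfl⟩ | ⟨rfl, rfl⟩⟩ := exists_eq_of_completeBipartiteGraph_adj h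
    exacts [farBQ w a i hwu hwv, farBQ w a i hwv hwu]
  far_PP := by
    intro u v u' v' h h' hs
    obtain ⟨a, i, ⟨rfl, rfl⟩ | ⟨rfl, rfl⟩⟩ := exists_eq_of_completeBipartiteGraph_adj h <;>
    obtain ⟨b, j, ⟨rfl, rfl⟩ | ⟨rfl, rfl⟩⟩ := exists_eq_of_completeBipartiteGraph_adj h' <;>
    exact farQQ a i b j fun hab => hs (by
      obtain ⟨rfl, rfl⟩ := Prod.mk.inj hab
      first | rfl | exact Sym2.eq_swap)

end FatMinorModel

namespace Ugraph

variable {t : ℕ}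

lemma adj_none_some (i : Fin t) : (Ugraph t).Adj none (some i) := by
  simp [Ugraph]

def pathHom (t : ℕ) : pathGraph t →g Ugraph t where
  toFun := some
  map_rel' {u v} h := by
    rw [pathGraph_adj] at h
    simp only [Ugraph, SimpleGraph.fromRel_adj, ne_eq, Option.some.injEq]
    refine ⟨fun huv => by subst huv; omega, ?_⟩
    rcases h with h | h
    exacts [.inl (.inr ⟨u, v, rfl, rfl, h⟩), .inr (.inr ⟨v, u, rfl, rfl, h⟩)]

end Ugraph

namespace FatMinorModel

variable {G : SimpleGraph V} {t K m : ℕ} (M : FatMinorModel G (Ugraph t) K)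
  (sp : ∀ i, G.SpokeSplit (M.B none) (M.B (some i)) (M.P none (some i)) m)

def pathSet : Set V := M.branchUnion (Ugraph.pathHom t)

lemma farApart_B_none_pathSet : G.FarApart K (M.B none) M.pathSet := by
  rintro x hx y (hy | hy)
  · obtain ⟨j, hy⟩ := Set.mem_iUnion.1 hy
    exact M.far_BB (Option.some_ne_none j).symm x hx y hy
  · simp only [Set.mem_iUnion] at hy
    obtain ⟨u, v, h, hy⟩ := hy
    exact M.far_BP ((Ugraph.pathHom t).map_adj h) (Option.some_ne_none u).symm
      (Option.some_ne_none v).symm x hx y hy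

lemma farApart_pathSet_core (hmK : m ≤ K) (i : Fin t) : G.FarApart m M.pathSet (sp i).core := by
  rintro x (hx | hx) y hy
  · obtain ⟨j, hx⟩ := Set.mem_iUnion.1 hx
    rcases eq_or_ne j i with rfl | hji
    · exact (sp j).farApart_tip_core x hx y hy
    · exact FarApart.mono (M.far_BP (Ugraph.adj_none_some i) (Option.some_ne_none j)
        (by simpa using hji)) hmK subset_rfl (sp i).core_subset x hx y hy
  · simp only [Set.mem_iUnion] at hx
    obtain ⟨u, v, h, hx⟩ := hx
    exact FarApart.mono (M.far_PP ((Ugraph.pathHom t).map_adj h) (Ugraph.adj_none_some i)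
      (by simp [Ugraph.pathHom])) hmK subset_rfl (sp i).core_subset x hx y hy

def hubSet : Set V := M.B none ∪ ⋃ i, (sp i).tail

def hubs : Fin 2 → Set V := ![M.hubSet sp, M.pathSet]

lemma hubSet_subset_cthickening : M.hubSet sp ⊆ G.cthickening m (M.B none) :=
  Set.union_subset (subset_cthickening m)
    (Set.iUnion_subset fun i => (sp i).tail_subset_cthickening)

lemma connected_induce_hubs (ht : 1 ≤ t) (a : Fin 2) : (G.induce (M.hubs sp a)).Connected := by
  fin_cases a
  · exact connected_induce_union_iUnion (M.Bconnected none) (fun i => (sp i).tail_connected)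
      fun i => (sp i).hub_meets_tail
  · exact M.connected_induce_branchUnion _
      ((connected_iff _).2 ⟨pathGraph_preconnected t, ⟨0, ht⟩⟩)

lemma hubs_inter_link_nonempty (a : Fin 2) (i : Fin t) :
    (M.hubs sp a ∩ (sp i).link a).Nonempty := by
  fin_cases a
  · obtain ⟨x, hx, hx'⟩ := (sp i).tail_meets_link
    exact ⟨x, .inr (Set.mem_iUnion.2 ⟨i, hx⟩), hx'⟩
  · obtain ⟨x, hx, hx'⟩ := (sp i).tip_meets_link
    exact ⟨x, M.B_subset_branchUnion (Ugraph.pathHom t) i hx, hx'⟩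

variable {sp} (hK : 3 * m ≤ K)
include hK

lemma farApart_hubs : Pairwise fun a b => G.FarApart m (M.hubs sp a) (M.hubs sp b) := by
  have h : G.FarApart m (M.hubs sp 0) (M.hubs sp 1) :=
    M.farApart_B_none_pathSet.of_subset_cthickening_left
      (M.hubSet_subset_cthickening sp) (by omega)
  intro a b hab
  fin_cases a <;> fin_cases b
  exacts [absurd rfl hab, h, h.symm, absurd rfl hab]

lemma farApart_hubs_core (a : Fin 2) (i : Fin t) : G.FarApart m (M.hubs sp a) (sp i).core := by
  fin_cases a
  · exact (sp i).farApart_hub_core.of_subset_cthickening_left (M.hubSet_subset_cthickening sp)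
      (by omega)
  · exact M.farApart_pathSet_core sp (by omega) i

lemma farApart_hubs_link (a b : Fin 2) (i : Fin t) (hab : a ≠ b) :
    G.FarApart m (M.hubs sp a) ((sp i).link b) := by
  fin_cases a <;> fin_cases b
  · exact absurd rfl hab
  · exact (sp i).farApart_hub_link_one.of_subset_cthickening_left
      (M.hubSet_subset_cthickening sp) (by omega)
  · exact (M.farApart_B_none_pathSet.of_subset_cthickening_left
      (sp i).link_zero_subset_cthickening (by omega)).symm
  · exact absurd rfl hab

lemma farApart_core_core : Pairwise fun i j => G.FarApart m (sp i).core (sp j).core :=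
  fun i j hij => FarApart.mono (M.far_PP (Ugraph.adj_none_some i) (Ugraph.adj_none_some j)
    (by simpa using hij)) (by omega) (sp i).core_subset (sp j).core_subset

lemma farApart_core_link (a : Fin 2) (i j : Fin t) (hij : i ≠ j) :
    G.FarApart m (sp i).core ((sp j).link a) :=
  FarApart.of_subset_cthickening (M.far_PP (Ugraph.adj_none_some i) (Ugraph.adj_none_some j)
    (by simpa using hij)) ((sp i).core_subset.trans (subset_cthickening 0))
    ((sp j).link_subset_cthickening a) (by omega)

lemma farApart_link_link (a : Fin 2) (i : Fin t) (b : Fin 2) (j : Fin t)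
    (hne : (a, i) ≠ (b, j)) :
    G.FarApart m ((sp i).link a) ((sp j).link b) := by
  rcases eq_or_ne i j with rfl | hij
  · have h : G.FarApart m ((sp i).link 0) ((sp i).link 1) :=
      (sp i).farApart_hub_link_one.of_subset_cthickening_left
        (sp i).link_zero_subset_cthickening (by omega)
    fin_cases a <;> fin_cases b
    exacts [absurd rfl hne, h, h.symm, absurd rfl hne]
  · exact FarApart.of_subset_cthickening (M.far_PP (Ugraph.adj_none_some i)
      (Ugraph.adj_none_some j) (by simpa using hij)) ((sp i).link_subset_cthickening a)
      ((sp j).link_subset_cthickening b) (by omega)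

end FatMinorModel

/-- For every `t ≥ 1`, if a graph `G` contains a `K`-fat minor model of
`U_t` for some `K ≥ 12`, then `G` contains a `⌊K/4⌋`-fat minor model of `K_{2,t}`.
Consequently, a `K_{2,t}`-asymptotic minor-free graph class is `U_t`-asymptotic
minor-free. -/
theorem fatMinor_K2t_of_fatMinor_Ugraph (t : ℕ) (ht : 1 ≤ t)
    (G : SimpleGraph V) (K : ℕ) (hK : 12 ≤ K)
    (h : Nonempty (FatMinorModel G (Ugraph t) K)) :
    Nonempty (FatMinorModel G (completeBipartiteGraph (Fin 2) (Fin t)) (K / 4)) := by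
  obtain ⟨M⟩ := h
  have hm : 3 * (K / 4) ≤ K := by omega
  have sp (i : Fin t) : G.SpokeSplit (M.B none) (M.B (some i)) (M.P none (some i)) (K / 4) :=
    have hadj := Ugraph.adj_none_some i
    (nonempty_spokeSplit (M.Pconnected hadj) (M.meets hadj) (M.Psymm _ _ ▸ M.meets hadj.symm)
      (M.far_BB (Option.some_ne_none i).symm) (by omega) (Nat.mul_div_le K 4)).some
  exact ⟨.ofCompleteBipartite (M.hubs sp) (fun i => (sp i).core) (fun a i => (sp i).link a)
    (M.connected_induce_hubs sp ht) (fun i => (sp i).core_connected)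
    (fun a i => (sp i).link_connected a) (M.hubs_inter_link_nonempty sp)
    (fun a i => (sp i).core_meets_link a) (M.farApart_hubs hm) (M.farApart_core_core hm)
    (M.farApart_hubs_core hm) (M.farApart_hubs_link hm) (M.farApart_core_link hm)
    (M.farApart_link_link hm)⟩
end

section
/- Let G be a connected graph, r ≥ 2 an integer, H = G^r, and v a vertex of G. Then the vertices of any v-rooted isometric path Q of G can be covered by r many v-rooted isometric paths of H. -/
open SimpleGraph

variable {V : Type*}

/-- The `r`-th power of `G`: two distinct vertices are adjacent iff their distance in `G`
is at most `r`. -/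
def SimpleGraph.power (G : SimpleGraph V) (r : ℕ) : SimpleGraph V where
  Adj u v := u ≠ v ∧ G.Reachable u v ∧ G.dist u v ≤ r
  symm := by
    constructor
    rintro u v ⟨h1, h2, h3⟩
    exact ⟨h1.symm, h2.symm, by rwa [G.dist_comm]⟩
  loopless := by constructor; rintro u ⟨h1, -, -⟩; exact h1 rfl

/-!
Write `q = (q₀, …, qₙ)`. Since `q` is isometric and rooted at `v`, `dist_G(v, qₘ) = m`, and as an
edge of `G^r` spans `G`-distance at most `r`, every `G^r`-walk from `v` to `qₘ` has at least
`⌈m / r⌉` edges. The walk `v, …, q_{m-2r}, q_{m-r}, qₘ` hopping back along `q` by `r` steps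
(the hop onto `v` possibly shorter) has exactly that many, so it is isometric in `G^r`, and it
visits every `qⱼ` with `j ≡ m (mod r)`. The `r` walks ending at `qₙ₋ᵢ`, `i < r` (with `n - i`
truncated at `0`), meet every residue class and so cover `q`.
-/

namespace SimpleGraph

lemma Walk.dist_getVert_le {G : SimpleGraph V} {u w : V} (p : G.Walk u w) {i j : ℕ}
    (hij : i ≤ j) : G.dist (p.getVert i) (p.getVert j) ≤ j - i := by
  have h := dist_le ((p.drop i).take (j - i))
  rw [Walk.take_length, Walk.drop_getVert, Nat.add_sub_cancel' hij] at h
  exact h.trans inf_le_left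

lemma dist_le_mul_length_of_power {G : SimpleGraph V} {r : ℕ} {u w : V}
    (p : (G.power r).Walk u w) : G.dist u w ≤ r * p.length := by
  induction p with
  | nil => simp
  | @cons x y z hxy p ih =>
    calc G.dist x z ≤ G.dist x y + G.dist y z := hxy.2.1.dist_triangle_left z
      _ ≤ r + r * p.length := Nat.add_le_add hxy.2.2 ih
      _ = r * (Walk.cons hxy p).length := by rw [Walk.length_cons]; ring

end SimpleGraph

lemma IsometricPath.of_forall_length_le {G : SimpleGraph V} {u w : V} (p : G.Walk u w)
    (h : ∀ p' : G.Walk u w, p.length ≤ p'.length) : IsometricPath G p := by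
  obtain ⟨p', hp'⟩ := p.reachable.exists_walk_length_eq_dist
  have hlen : p.length = G.dist u w := le_antisymm (hp' ▸ h p') (SimpleGraph.dist_le p)
  exact ⟨p.isPath_of_length_eq_dist hlen, hlen⟩

namespace IsometricPath

variable {G : SimpleGraph V} {u w : V} {q : G.Walk u w}

lemma dist_getVert (hq : IsometricPath G q) {i : ℕ} (hi : i ≤ q.length) :
    G.dist u (q.getVert i) = i := by
  have hstart := q.dist_getVert_le (Nat.zero_le i)
  have hend := q.dist_getVert_le hi
  rw [Walk.getVert_zero] at hstart
  rw [Walk.getVert_length] at hend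
  have := (q.take i).reachable.dist_triangle_left w
  have := hq.2
  omega

lemma power_adj_getVert (hq : IsometricPath G q) {r i j : ℕ} (hij : i < j)
    (hj : j ≤ q.length) (hjr : j - i ≤ r) : (G.power r).Adj (q.getVert i) (q.getVert j) := by
  refine ⟨fun h => ?_, (q.take i).reachable.symm.trans (q.take j).reachable,
    (q.dist_getVert_le hij.le).trans hjr⟩
  have := congrArg (G.dist u) h
  rw [hq.dist_getVert (by omega), hq.dist_getVert hj] at this
  omega

lemma exists_power_walk (hq : IsometricPath G q) {r : ℕ} (hr : 0 < r) {m : ℕ}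
    (hm : m ≤ q.length) :
    ∃ p : (G.power r).Walk u (q.getVert m), p.length * r < m + r ∧
      ∀ j ≤ m, r ∣ m - j → q.getVert j ∈ p.support := by
  induction m using Nat.strong_induction_on with
  | _ m ih =>
  rcases Nat.eq_zero_or_pos m with rfl | hm0
  · refine ⟨Walk.nil.copy rfl q.getVert_zero.symm, by simpa using hr, fun j hj _ => ?_⟩
    simp [Nat.le_zero.mp hj]
  obtain ⟨p, hlen, hsupp⟩ := ih (m - r) (by omega) (by omega)
  have hadj := hq.power_adj_getVert (r := r) (i := m - r) (j := m) (by omega) hm (by omega)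
  refine ⟨p.concat hadj, ?_, fun j hj hdvd => ?_⟩
  · rw [Walk.length_concat, add_mul, one_mul]
    rcases le_or_gt r m with hrm | hmr
    · omega
    · have : p.length < 1 := Nat.lt_of_mul_lt_mul_right (a := r) (by omega)
      simp [Nat.lt_one_iff.mp this, hm0]
  rw [Walk.support_concat, List.mem_append, List.mem_singleton]
  rcases eq_or_lt_of_le hj with rfl | hjm
  · exact Or.inr rfl
  have hjr : j + r ≤ m := by have := Nat.le_of_dvd (by omega) hdvd; omega
  refine Or.inl (hsupp j (by omega) ?_)
  rw [show m - r - j = m - j - r by omega]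
  exact Nat.dvd_sub hdvd dvd_rfl

lemma exists_isometricPath_power (hq : IsometricPath G q) {r : ℕ} (hr : 0 < r) {m : ℕ}
    (hm : m ≤ q.length) :
    ∃ p : (G.power r).Walk u (q.getVert m), IsometricPath (G.power r) p ∧
      ∀ j ≤ m, r ∣ m - j → q.getVert j ∈ p.support := by
  obtain ⟨p, hlen, hsupp⟩ := hq.exists_power_walk hr hm
  refine ⟨p, of_forall_length_le p fun p' => ?_, hsupp⟩
  have := dist_le_mul_length_of_power p'
  rw [hq.dist_getVert hm] at this
  exact Nat.lt_add_one_iff.mp (Nat.lt_of_mul_lt_mul_right (a := r) (by rw [add_mul]; nlinarith))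

end IsometricPath

theorem rooted_cover_in_power_general (G : SimpleGraph V)
    (r : ℕ) (hr : 2 ≤ r) (v : V) {w : V} (q : G.Walk v w)
    (hq : IsometricPath G q) :
    ∃ Q : Fin r → Σ x : V, (G.power r).Walk v x,
      (∀ i, IsometricPath (G.power r) (Q i).2) ∧
      ∀ x ∈ q.support, ∃ i, x ∈ (Q i).2.support := by
  have hr0 : 0 < r := by omega
  choose Q hQ hcover using fun i : Fin r =>
    hq.exists_isometricPath_power hr0 (Nat.sub_le q.length i)
  refine ⟨fun i => ⟨_, Q i⟩, hQ, fun x hx => ?_⟩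
  obtain ⟨j, rfl, hj⟩ := Walk.mem_support_iff_exists_getVert.mp hx
  have hmod := Nat.mod_le (q.length - j) r
  refine ⟨⟨(q.length - j) % r, Nat.mod_lt _ hr0⟩, hcover _ j (by simp only; omega) ?_⟩
  rw [show q.length - (q.length - j) % r - j = q.length - j - (q.length - j) % r by omega]
  exact Nat.dvd_sub_mod _

/-- the vertices of any `v`-rooted isometric path `Q` of a connected graph
`G` can be covered by `r` many `v`-rooted isometric paths of `H = G^r`. -/
theorem rooted_cover_in_power (G : SimpleGraph V) (hG : G.Connected)
    (r : ℕ) (hr : 2 ≤ r) (v : V) {w : V} (q : G.Walk v w)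
    (hq : IsometricPath G q) :
    ∃ Q : Fin r → Σ x : V, (G.power r).Walk v x,
      (∀ i, IsometricPath (G.power r) (Q i).2) ∧
      ∀ x ∈ q.support, ∃ i, x ∈ (Q i).2.support :=
  rooted_cover_in_power_general G r hr v q hq
end

section
/- Let G be a connected graph and r ≥ 2 an integer. Then any isometric path of H = G^r contains at most one edge that is also an edge of G (i.e., at most one edge joining vertices adjacent in G). -/
open SimpleGraph

variable {V : Type*}

/-! A walk of length `k` in `G^r` gives one of length at most `r * k` in `G`, and a walk of length
at most `n * r` in `G` gives one of length at most `n` in `G^r`. If a geodesic of `G^r` ran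
through a `G`-edge `u w`, a stretch `w ⋯ a` of `k` steps and a `G`-edge `a b`, then
`d_G(u, b) ≤ r * k + 2 ≤ r * (k + 1)` as `r ≥ 2`, so its `k + 2` steps from `u` to `b` could be
replaced by `k + 1`. -/

namespace SimpleGraph

variable {G : SimpleGraph V} {r : ℕ}

theorem exists_walk_of_power_walk {u v : V} (q : (G.power r).Walk u v) :
    ∃ p : G.Walk u v, p.length ≤ r * q.length := by
  induction q with
  | nil => exact ⟨.nil, by simp⟩
  | cons h _ ih =>
    obtain ⟨p₀, hp₀⟩ := h.2.1.exists_walk_length_eq_dist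
    obtain ⟨p, hp⟩ := ih
    refine ⟨p₀.append p, ?_⟩
    simp only [Walk.length_append, Walk.length_cons, hp₀]
    linarith [h.2.2]

theorem exists_power_walk_of_walk (n : ℕ) {u v : V} (p : G.Walk u v) (hp : p.length ≤ n * r) :
    ∃ q : (G.power r).Walk u v, q.length ≤ n := by
  induction n generalizing u with
  | zero =>
    obtain rfl := Walk.eq_of_length_eq_zero (by simpa using hp)
    exact ⟨.nil, le_rfl⟩
  | succ n ih =>
    obtain ⟨q, hq⟩ := ih (p.drop r) <| by
      rw [Walk.drop_length]
      exact Nat.sub_le_of_le_add (by rwa [← Nat.succ_mul])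
    by_cases hx : u = p.getVert r
    · exact ⟨q.copy hx.symm rfl, by simpa using hq.trans n.le_succ⟩
    · have hadj : (G.power r).Adj u (p.getVert r) :=
        ⟨hx, (p.take r).reachable,
          (dist_le _).trans ((p.take_length r).trans_le (min_le_left _ _))⟩
      exact ⟨.cons hadj q, by simpa using hq⟩

theorem exists_power_walk_of_adj_walk_adj (hr : 2 ≤ r) {u w a b : V} (huw : G.Adj u w)
    (q : (G.power r).Walk w a) (hab : G.Adj a b) :
    ∃ s : (G.power r).Walk u b, s.length ≤ q.length + 1 := by
  obtain ⟨p, hp⟩ := exists_walk_of_power_walk q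
  refine exists_power_walk_of_walk (q.length + 1) (.cons huw (p.concat hab)) ?_
  simp only [Walk.length_cons, Walk.length_concat]
  nlinarith

theorem notMem_edgeSet_of_mem_edges_of_length_cons_eq_dist (hr : 2 ≤ r) {u w v : V}
    (h : (G.power r).Adj u w) (huw : G.Adj u w) (q : (G.power r).Walk w v)
    (hq : (q.cons h).length = (G.power r).dist u v) {e : Sym2 V} (he : e ∈ q.edges) :
    e ∉ G.edgeSet := by
  intro heG
  obtain ⟨d, hd, rfl⟩ := List.mem_map.mp he
  obtain ⟨q₁, q₂, rfl⟩ := (Walk.isSubwalk_toWalk_adj_iff_mem_darts q).mpr hd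
  obtain ⟨s, hs⟩ := exists_power_walk_of_adj_walk_adj hr huw q₁ heG
  have := dist_le (s.append q₂)
  simp only [Walk.length_append, Walk.length_cons, Walk.length_nil] at hq this
  omega

theorem eq_of_mem_edges_of_length_eq_dist (hr : 2 ≤ r) {u v : V} (p : (G.power r).Walk u v)
    (hp : p.length = (G.power r).dist u v) :
    ∀ e₁ ∈ p.edges, ∀ e₂ ∈ p.edges, e₁ ∈ G.edgeSet → e₂ ∈ G.edgeSet → e₁ = e₂ := by
  induction p with
  | nil => simp
  | cons h q ih =>
    have hq := length_eq_dist_of_subwalk hp (q.isSubwalk_cons h)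
    intro e₁ he₁ e₂ he₂ hG₁ hG₂
    rw [Walk.edges_cons, List.mem_cons] at he₁ he₂
    rcases he₁ with rfl | he₁ <;> rcases he₂ with rfl | he₂
    · rfl
    · exact absurd hG₂ (notMem_edgeSet_of_mem_edges_of_length_cons_eq_dist hr h hG₁ q hp he₂)
    · exact absurd hG₁ (notMem_edgeSet_of_mem_edges_of_length_cons_eq_dist hr h hG₂ q hp he₁)
    · exact ih hq e₁ he₁ e₂ he₂ hG₁ hG₂

end SimpleGraph

theorem at_most_one_black_edge_general (G : SimpleGraph V)
    (r : ℕ) (hr : 2 ≤ r) {u v : V} (p : (G.power r).Walk u v)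
    (hp : IsometricPath (G.power r) p) :
    ∀ e₁ ∈ p.edges, ∀ e₂ ∈ p.edges, e₁ ∈ G.edgeSet → e₂ ∈ G.edgeSet → e₁ = e₂ :=
  G.eq_of_mem_edges_of_length_eq_dist hr p hp.2

/-- any isometric path of `G^r` (`r ≥ 2`, `G` connected) contains at most one
edge that is also an edge of `G`. -/
theorem at_most_one_black_edge (G : SimpleGraph V) (hG : G.Connected)
    (r : ℕ) (hr : 2 ≤ r) {u v : V} (p : (G.power r).Walk u v)
    (hp : IsometricPath (G.power r) p) :
    ∀ e₁ ∈ p.edges, ∀ e₂ ∈ p.edges, e₁ ∈ G.edgeSet → e₂ ∈ G.edgeSet → e₁ = e₂ :=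
  at_most_one_black_edge_general G r hr p hp
end

section
/- Let G be a graph and let e₁e₂…e_k (k ≥ 2) be an isometric path in the line graph L(G). Then the edges e₂, e₃, …, e_{k-1} induce an isometric path in G. -/
open SimpleGraph

variable {V : Type*}

/-!
A walk `a = v₁ v₂ … v_{k-1} = b` in `G` with edges `e₂, …, e_{k-1}` lifts to a walk
`e₁ e₂ … e_k` of length `k - 1` in `L(G)` as soon as `a ∈ e₁` and `b ∈ e_k`, so
`d_L(e₁, e_k) ≤ d_G(a, b) + 1`. For a geodesic of `L(G)` this forces `d_G(a, b) ≥ k - 2`,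
the length of the middle path. The endpoint condition holds once `k ≥ 4`: if `e₁` met
`e₂ = ac` only in `c`, it would also meet `e₃ ∋ c`, shortcutting the geodesic.
Middle paths of length at most one are trivially isometric.
-/

namespace SimpleGraph

lemma Walk.length_eq_dist_of_length_le_one {G : SimpleGraph V} {u v : V} (p : G.Walk u v)
    (hp : p.length ≤ 1) : p.length = G.dist u v := by
  interval_cases h : p.length
  · obtain rfl := p.eq_of_length_eq_zero h
    simp
  · exact (dist_eq_one_iff_adj.mpr (p.adj_of_length_eq_one h)).symm

lemma Walk.ne_and_not_adj_of_length_cons_cons_eq_dist {G : SimpleGraph V} {u v w x : V}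
    (huv : G.Adj u v) (hvw : G.Adj v w) (p : G.Walk w x)
    (hp : (cons huv (cons hvw p)).length = G.dist u x) : u ≠ w ∧ ¬ G.Adj u w := by
  simp only [length_cons] at hp
  refine ⟨?_, fun huw => ?_⟩
  · rintro rfl
    have := G.dist_le p
    omega
  · have := G.dist_le (cons huw p)
    simp only [length_cons] at this
    omega

variable {G : SimpleGraph V}

lemma Walk.exists_lineGraph_walk_length_le {u v : V} (w : G.Walk u v) {x y : G.edgeSet}
    (hu : u ∈ (x : Sym2 V)) (hv : v ∈ (y : Sym2 V)) :
    ∃ W : G.lineGraph.Walk x y, W.length ≤ w.length + 1 := by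
  induction w generalizing x with
  | nil =>
    by_cases hxy : x = y
    · subst hxy
      exact ⟨.nil, by simp⟩
    · exact ⟨.cons (lineGraph_adj_iff_exists.mpr ⟨hxy, _, hu, hv⟩) .nil, by simp⟩
  | @cons u u' v huu' w ih =>
    obtain ⟨W, hW⟩ := ih (x := ⟨s(u, u'), huu'⟩) (Sym2.mem_mk_right u u') hv
    by_cases hx : x = ⟨s(u, u'), huu'⟩
    · subst hx
      exact ⟨W, by simp only [length_cons]; omega⟩
    · refine ⟨.cons (lineGraph_adj_iff_exists.mpr ⟨hx, u, hu, Sym2.mem_mk_left u u'⟩) W, ?_⟩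
      simp only [length_cons]
      omega

lemma lineGraph_dist_le_dist_add_one {u v : V} {x y : G.edgeSet} (hu : u ∈ (x : Sym2 V))
    (hv : v ∈ (y : Sym2 V)) (huv : G.Reachable u v) :
    G.lineGraph.dist x y ≤ G.dist u v + 1 := by
  obtain ⟨w, hw⟩ := huv.exists_walk_length_eq_dist
  obtain ⟨W, hW⟩ := w.exists_lineGraph_walk_length_le hu hv
  exact (dist_le W).trans (hw ▸ hW)

lemma mem_of_lineGraph_adj_of_not_adj {x y z : G.edgeSet} {a c d : V}
    (hy : (y : Sym2 V) = s(a, c)) (hz : (z : Sym2 V) = s(c, d))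
    (hxy : G.lineGraph.Adj x y) (hxz : x ≠ z) (hxz' : ¬ G.lineGraph.Adj x z) :
    a ∈ (x : Sym2 V) := by
  obtain ⟨-, v, hvx, hvy⟩ := lineGraph_adj_iff_exists.mp hxy
  rw [hy, Sym2.mem_iff] at hvy
  rcases hvy with rfl | rfl
  · exact hvx
  · exact absurd (lineGraph_adj_iff_exists.mpr ⟨hxz, v, hvx, hz ▸ Sym2.mem_mk_left v d⟩) hxz'

lemma start_mem_of_edges_eq_middle {e f : G.edgeSet} (p : G.lineGraph.Walk e f)
    (hp : p.length = G.lineGraph.dist e f) (h3 : 3 ≤ p.length) {a b : V} (q : G.Walk a b)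
    (hq : q.edges = ((p.support.drop 1).dropLast).map Subtype.val) :
    a ∈ (e : Sym2 V) := by
  obtain _ | @⟨_, e₂, _, h₁, _ | @⟨_, e₃, _, h₂, _ | ⟨_, p₃⟩⟩⟩ := p
  iterate 3 · simp at h3
  obtain ⟨he, he'⟩ := Walk.ne_and_not_adj_of_length_cons_cons_eq_dist h₁ h₂ _ hp
  obtain _ | @⟨_, c, _, _, _ | @⟨_, d, _, _, q'⟩⟩ := q
  iterate 2 · simp [List.dropLast_cons_of_ne_nil] at hq
  simp only [Walk.support_cons, Walk.edges_cons, List.drop_one, List.tail_cons,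
    List.dropLast_cons_of_ne_nil (Walk.support_ne_nil _),
    List.dropLast_cons_of_ne_nil (List.cons_ne_nil _ _), List.map_cons, List.cons.injEq] at hq
  exact mem_of_lineGraph_adj_of_not_adj hq.1.symm hq.2.1.symm h₁ he he'

end SimpleGraph

theorem middle_edges_isometric_general (G : SimpleGraph V)
    {e f : G.edgeSet} (p : G.lineGraph.Walk e f)
    (hp : IsometricPath G.lineGraph p)
    {a b : V} (q : G.Walk a b)
    (hedges : q.edges = ((p.support.drop 1).dropLast).map Subtype.val) :
    IsometricPath G q := by
  obtain ⟨-, hpd⟩ := hp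
  suffices hq : q.length = G.dist a b from ⟨q.isPath_of_length_eq_dist hq, hq⟩
  have hlen : q.length = p.length - 1 := by
    simpa using congrArg List.length hedges
  rcases le_or_gt p.length 2 with hshort | hlong
  · exact q.length_eq_dist_of_length_le_one (by omega)
  have ha := start_mem_of_edges_eq_middle p hpd hlong q hedges
  have hb : b ∈ (f : Sym2 V) := by
    refine start_mem_of_edges_eq_middle p.reverse ?_ (by simpa) q.reverse ?_
    · simp [hpd, dist_comm]
    · simp [hedges, List.drop_one, List.tail_dropLast]
  have := lineGraph_dist_le_dist_add_one ha hb q.reachable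
  exact le_antisymm (by omega) (G.dist_le q)

/-- if `e₁e₂…e_k` (`k ≥ 2`) is an isometric path in the line graph `L(G)`,
then the edges `e₂, …, e_{k-1}` induce an isometric path in `G`: any path of `G` whose
edge list is exactly `e₂, …, e_{k-1}` is isometric. -/
theorem middle_edges_isometric (G : SimpleGraph V) (hG : G.Connected)
    {e f : G.edgeSet} (p : G.lineGraph.Walk e f)
    (hp : IsometricPath G.lineGraph p) (hk : 2 ≤ p.support.length)
    {a b : V} (q : G.Walk a b) (hq : q.IsPath)
    (hedges : q.edges = ((p.support.drop 1).dropLast).map Subtype.val) :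
    IsometricPath G q :=
  middle_edges_isometric_general G p hp q hedges
end

section
/- If P is an isometric path in a graph G, then its line graph L(P) (the path in L(G) on the edges of P in order) is an isometric path in L(G). -/
open SimpleGraph

variable {V : Type*}

/-! A walk of length `k` in `L(G)` from `e` to `f` yields a walk of length at most `k + 1` in
`G` between any end of `e` and any end of `f`: consecutive edges share a vertex. So if `P` is
isometric with ends `u ∈ e` and `v ∈ f`, then `|P| = d(u, v) ≤ d_L(e, f) + 1`, while `L(P)` has
length `|P| - 1`; hence `L(P)` is a shortest walk, and it is a path since `P` has no repeated
edge. -/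

namespace SimpleGraph

variable {G : SimpleGraph V}

lemma exists_walk_length_le_one_of_mem_edge {e : G.edgeSet} {u w : V}
    (hu : u ∈ (e : Sym2 V)) (hw : w ∈ (e : Sym2 V)) : ∃ p : G.Walk u w, p.length ≤ 1 := by
  rcases eq_or_ne u w with rfl | hne
  · exact ⟨.nil, by simp⟩
  · have hedge : s(u, w) ∈ G.edgeSet := (Sym2.mem_and_mem_iff hne).mp ⟨hu, hw⟩ ▸ e.2
    exact ⟨hedge.toWalk, hedge.length_toWalk.le⟩

lemma Walk.exists_walk_length_le_of_lineGraph {e f : G.edgeSet} (W : G.lineGraph.Walk e f)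
    {u v : V} (hu : u ∈ (e : Sym2 V)) (hv : v ∈ (f : Sym2 V)) :
    ∃ p : G.Walk u v, p.length ≤ W.length + 1 := by
  induction W generalizing u with
  | nil => simpa using exists_walk_length_le_one_of_mem_edge hu hv
  | cons h W ih =>
    obtain ⟨-, w, hwe, hwe'⟩ := lineGraph_adj_iff_exists.mp h
    obtain ⟨p₁, hp₁⟩ := exists_walk_length_le_one_of_mem_edge hu hwe
    obtain ⟨p₂, hp₂⟩ := ih hwe' hv
    exact ⟨p₁.append p₂, by simp only [Walk.length_append, Walk.length_cons]; omega⟩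

lemma Walk.dist_le_length_lineGraph_add_one {e f : G.edgeSet} (W : G.lineGraph.Walk e f)
    {u v : V} (hu : u ∈ (e : Sym2 V)) (hv : v ∈ (f : Sym2 V)) :
    G.dist u v ≤ W.length + 1 := by
  obtain ⟨p, hp⟩ := W.exists_walk_length_le_of_lineGraph hu hv
  exact (dist_le p).trans hp

lemma Walk.start_mem_of_support_map_eq_edges {u v : V} (p : G.Walk u v) {e f : G.edgeSet}
    (q : G.lineGraph.Walk e f) (h : q.support.map Subtype.val = p.edges) :
    u ∈ (e : Sym2 V) := by
  rw [← q.cons_tail_support, List.map_cons] at h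
  cases p with
  | nil => simp at h
  | cons _ p =>
    rw [Walk.edges_cons, List.cons.injEq] at h
    exact h.1 ▸ Sym2.mem_mk_left _ _

end SimpleGraph

theorem line_of_isometric_isometric_general (G : SimpleGraph V)
    {u v : V} (p : G.Walk u v) (hp : IsometricPath G p)
    {e f : G.edgeSet} (q : G.lineGraph.Walk e f)
    (hsupp : q.support.map Subtype.val = p.edges) :
    IsometricPath G.lineGraph q := by
  have hu : u ∈ (e : Sym2 V) := p.start_mem_of_support_map_eq_edges q hsupp
  have hv : v ∈ (f : Sym2 V) := by
    refine p.reverse.start_mem_of_support_map_eq_edges q.reverse ?_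
    rw [Walk.support_reverse, Walk.edges_reverse, List.map_reverse, hsupp]
  have hlen : q.length + 1 = p.length := by simpa using congrArg List.length hsupp
  have hpath : q.IsPath := (Walk.isPath_def q).2 ((hsupp ▸ hp.1.edges_nodup).of_map _)
  refine ⟨hpath, le_antisymm ?_ (dist_le q)⟩
  obtain ⟨W, hW⟩ := q.reachable.exists_walk_length_eq_dist
  have hdist := W.dist_le_length_lineGraph_add_one hu hv
  have hpdist := hp.2
  omega

/-- if `P` is an isometric path in `G`, then `L(P)`, the path in `L(G)` on
the edges of `P` in order, is an isometric path in `L(G)`. -/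
theorem line_of_isometric_isometric (G : SimpleGraph V) (hG : G.Connected)
    {u v : V} (p : G.Walk u v) (hp : IsometricPath G p)
    {e f : G.edgeSet} (q : G.lineGraph.Walk e f)
    (hsupp : q.support.map Subtype.val = p.edges) :
    IsometricPath G.lineGraph q :=
  line_of_isometric_isometric_general G p hp q hsupp
end

section
/- Let G be a graph, P an isometric (u,v)-path in G, and e₀ any edge of G incident to u. Then the vertices of the path L(P) in L(G) can be covered by two e₀-rooted isometric paths in L(G). -/
open SimpleGraph

variable {V : Type*}

/-!
Write `P = x₀ x₁ ⋯ x_k` with edges `eᵢ = x_{i-1}xᵢ`. A walk of length `ℓ` in `L(G)` between two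
edges gives a walk of length at most `ℓ + 1` in `G` between any of their ends, so
`i - 1 ≤ d_{L(G)}(e₀, eᵢ)`. Walking along `P`, extend an `e₀`-rooted geodesic of `L(G)` by the next
edge as long as the result is still geodesic. If this fails at `eᵢ`, the current geodesic covers
`e₁, …, e_{i-1}` and has length at most `i - 1`, so `d_{L(G)}(e₀, eᵢ) = i - 1`. By the lower bound,
extending a fresh geodesic to `eᵢ` along the rest of `P` then stays geodesic, and it covers the
remaining edges.
-/

namespace SimpleGraph

variable {G : SimpleGraph V}

lemma isometricPath_of_length_le_dist {u v : V} {p : G.Walk u v} (hp : p.length ≤ G.dist u v) :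
    IsometricPath G p :=
  have hlen : p.length = G.dist u v := le_antisymm hp (dist_le p)
  ⟨p.isPath_of_length_eq_dist hlen, hlen⟩

lemma isometricPath_nil {v : V} : IsometricPath G (Walk.nil : G.Walk v v) :=
  isometricPath_of_length_le_dist (by simp)

lemma IsometricPath.of_concat {u v w : V} {p : G.Walk u v} {h : G.Adj v w}
    (hp : IsometricPath G (p.concat h)) : IsometricPath G p := by
  apply isometricPath_of_length_le_dist
  have hlen := hp.2
  have htri : G.dist u w ≤ G.dist u v + G.dist v w := h.reachable.dist_triangle_right u
  rw [Walk.length_concat] at hlen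
  rw [dist_eq_one_iff_adj.mpr h] at htri
  omega

lemma exists_walk_length_le_one_of_mem_edgeSet {e : Sym2 V} (he : e ∈ G.edgeSet) {x y : V}
    (hx : x ∈ e) (hy : y ∈ e) : ∃ w : G.Walk x y, w.length ≤ 1 := by
  induction e using Sym2.ind with
  | _ a b =>
    rw [mem_edgeSet] at he
    rw [Sym2.mem_iff] at hx hy
    rcases hx with rfl | rfl <;> rcases hy with rfl | rfl
    exacts [⟨.nil, by simp⟩, ⟨he.toWalk, by simp⟩, ⟨he.symm.toWalk, by simp⟩, ⟨.nil, by simp⟩]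

lemma exists_walk_length_le_of_lineGraph_walk {e f : G.edgeSet} (W : G.lineGraph.Walk e f)
    {x y : V} (hx : x ∈ (e : Sym2 V)) (hy : y ∈ (f : Sym2 V)) :
    ∃ w : G.Walk x y, w.length ≤ W.length + 1 := by
  induction W generalizing x with
  | nil => simpa using exists_walk_length_le_one_of_mem_edgeSet (Subtype.prop _) hx hy
  | @cons a b c hadj W ih =>
    obtain ⟨-, z, hza, hzb⟩ := lineGraph_adj_iff_exists.mp hadj
    obtain ⟨w₁, hw₁⟩ := exists_walk_length_le_one_of_mem_edgeSet a.2 hx hza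
    obtain ⟨w₂, hw₂⟩ := ih hzb hy
    exact ⟨w₁.append w₂, by simp only [Walk.length_append, Walk.length_cons]; omega⟩

lemma dist_le_lineGraph_dist_add_one {e f : G.edgeSet} (hef : G.lineGraph.Reachable e f)
    {x y : V} (hx : x ∈ (e : Sym2 V)) (hy : y ∈ (f : Sym2 V)) :
    G.dist x y ≤ G.lineGraph.dist e f + 1 := by
  obtain ⟨W, hW⟩ := hef.exists_walk_length_eq_dist
  obtain ⟨w, hw⟩ := exists_walk_length_le_of_lineGraph_walk W hx hy
  exact (dist_le w).trans (hW ▸ hw)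

variable {e₀ : G.edgeSet}

/-- The invariant of the walk along `p`: `q₂` ends at an edge through the end of `p`, and either
it is shorter than `p`, so that extending it along `p` stays geodesic, or it covers `p` alone. -/
structure IsLineCover {u v : V} (p : G.Walk u v) {f₁ f₂ : G.edgeSet}
    (q₁ : G.lineGraph.Walk e₀ f₁) (q₂ : G.lineGraph.Walk e₀ f₂) : Prop where
  isometricPath_left : IsometricPath G.lineGraph q₁
  isometricPath_right : IsometricPath G.lineGraph q₂
  end_mem : v ∈ (f₂ : Sym2 V)
  length_right_le : q₂.length ≤ p.length
  length_right_lt_or_covers_right :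
    q₂.length < p.length ∨ ∀ e : G.edgeSet, (e : Sym2 V) ∈ p.edges → e ∈ q₂.support
  covers : ∀ e : G.edgeSet, (e : Sym2 V) ∈ p.edges → e ∈ q₁.support ∨ e ∈ q₂.support

lemma isLineCover_nil {u : V} (hu : u ∈ (e₀ : Sym2 V)) :
    IsLineCover (Walk.nil : G.Walk u u) (Walk.nil : G.lineGraph.Walk e₀ e₀) Walk.nil :=
  ⟨isometricPath_nil, isometricPath_nil, hu, by simp, by simp, by simp⟩

lemma forall_mem_edges_concat {u v w : V} {p : G.Walk u v} {h : G.Adj v w} {P : G.edgeSet → Prop}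
    (hp : ∀ e : G.edgeSet, (e : Sym2 V) ∈ p.edges → P e) (hvw : P ⟨s(v, w), h⟩) :
    ∀ e : G.edgeSet, (e : Sym2 V) ∈ (p.concat h).edges → P e := by
  intro e he
  rw [Walk.edges_concat, List.concat_eq_append, List.mem_append, List.mem_singleton] at he
  rcases he with he | he
  · exact hp e he
  · obtain rfl : e = ⟨s(v, w), h⟩ := Subtype.ext he
    exact hvw

lemma isLineCover_concat_of_covers {u v w : V} {p : G.Walk u v} {h : G.Adj v w} {f : G.edgeSet}
    {q : G.lineGraph.Walk e₀ f} (hq : IsometricPath G.lineGraph q)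
    (hcov : ∀ e : G.edgeSet, (e : Sym2 V) ∈ p.edges → e ∈ q.support)
    (W : G.lineGraph.Walk e₀ ⟨s(v, w), h⟩) (hW : IsometricPath G.lineGraph W)
    (hlen : W.length ≤ p.length) : IsLineCover (p.concat h) q W where
  isometricPath_left := hq
  isometricPath_right := hW
  end_mem := by simp
  length_right_le := by simp only [Walk.length_concat]; omega
  length_right_lt_or_covers_right := Or.inl (by simpa using hlen)
  covers := forall_mem_edges_concat (fun e he ↦ Or.inl (hcov e he)) (Or.inr W.end_mem_support)

namespace IsLineCover

variable {u v w : V} {p : G.Walk u v} {h : G.Adj v w} {f₁ f₂ : G.edgeSet}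
  {q₁ : G.lineGraph.Walk e₀ f₁} {q₂ : G.lineGraph.Walk e₀ f₂}

lemma concat_of_extend (hc : IsLineCover p q₁ q₂) {f : G.edgeSet} (q : G.lineGraph.Walk e₀ f)
    (hf : f = ⟨s(v, w), h⟩) (hq : IsometricPath G.lineGraph q) (hsupp : q₂.support ⊆ q.support)
    (hlen : q.length ≤ q₂.length + 1) : IsLineCover (p.concat h) q₁ q := by
  subst hf
  have hlen₂ := hc.length_right_le
  refine ⟨hc.isometricPath_left, hq, by simp, by simp only [Walk.length_concat]; omega, ?_, ?_⟩
  · refine hc.length_right_lt_or_covers_right.imp (fun h₂ ↦ ?_) (fun hcov ↦ ?_)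
    · simp only [Walk.length_concat]; omega
    · exact forall_mem_edges_concat (fun e he ↦ hsupp (hcov e he)) q.end_mem_support
  · exact forall_mem_edges_concat (fun e he ↦ (hc.covers e he).imp_right (@hsupp e))
      (Or.inr q.end_mem_support)

lemma exists_concat (hu : u ∈ (e₀ : Sym2 V)) (hc : IsLineCover p q₁ q₂)
    (hp : IsometricPath G (p.concat h)) :
    ∃ (f₁' f₂' : G.edgeSet) (q₁' : G.lineGraph.Walk e₀ f₁') (q₂' : G.lineGraph.Walk e₀ f₂'),
      IsLineCover (p.concat h) q₁' q₂' := by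
  by_cases heq : f₂ = ⟨s(v, w), h⟩
  · exact ⟨_, _, _, _,
      hc.concat_of_extend q₂ heq hc.isometricPath_right (List.Subset.refl _) (by omega)⟩
  have hadj : G.lineGraph.Adj f₂ ⟨s(v, w), h⟩ :=
    lineGraph_adj_iff_exists.mpr ⟨heq, v, hc.end_mem, by simp⟩
  have hreach := (q₂.concat hadj).reachable
  have hlow : p.length ≤ G.lineGraph.dist e₀ ⟨s(v, w), h⟩ := by
    have hdist := dist_le_lineGraph_dist_add_one hreach hu (y := w) (by simp)
    have hlen := hp.2
    rw [Walk.length_concat] at hlen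
    omega
  by_cases hext : q₂.length + 1 ≤ G.lineGraph.dist e₀ ⟨s(v, w), h⟩
  · refine ⟨_, _, _, _, hc.concat_of_extend (q₂.concat hadj) rfl ?_ ?_ (by simp)⟩
    · exact isometricPath_of_length_le_dist (by simpa using hext)
    · simp [Walk.support_concat]
  · have hcov := hc.length_right_lt_or_covers_right.resolve_left (by omega)
    obtain ⟨W, hW⟩ := hreach.exists_walk_length_eq_dist
    have hlen := hc.length_right_le
    exact ⟨_, _, _, _, isLineCover_concat_of_covers hc.isometricPath_right hcov W
      (isometricPath_of_length_le_dist hW.le) (by omega)⟩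

end IsLineCover

lemma exists_isLineCover {u v : V} (hu : u ∈ (e₀ : Sym2 V)) (p : G.Walk u v)
    (hp : IsometricPath G p) :
    ∃ (f₁ f₂ : G.edgeSet) (q₁ : G.lineGraph.Walk e₀ f₁) (q₂ : G.lineGraph.Walk e₀ f₂),
      IsLineCover p q₁ q₂ := by
  induction p using Walk.concatRec with
  | Hnil => exact ⟨_, _, _, _, isLineCover_nil hu⟩
  | Hconcat p h ih =>
    obtain ⟨f₁, f₂, q₁, q₂, hc⟩ := ih hu hp.of_concat
    exact hc.exists_concat hu hp

end SimpleGraph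

theorem line_path_two_rooted_cover_general (G : SimpleGraph V)
    {u v : V} (p : G.Walk u v) (hp : IsometricPath G p)
    (e₀ : G.edgeSet) (he₀ : u ∈ (e₀ : Sym2 V)) :
    ∃ (f₁ f₂ : G.edgeSet) (q₁ : G.lineGraph.Walk e₀ f₁) (q₂ : G.lineGraph.Walk e₀ f₂),
      IsometricPath G.lineGraph q₁ ∧ IsometricPath G.lineGraph q₂ ∧
      ∀ e : G.edgeSet, (e : Sym2 V) ∈ p.edges → e ∈ q₁.support ∨ e ∈ q₂.support := by
  obtain ⟨f₁, f₂, q₁, q₂, hc⟩ := exists_isLineCover he₀ p hp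
  exact ⟨f₁, f₂, q₁, q₂, hc.isometricPath_left, hc.isometricPath_right, hc.covers⟩

/-- if `P` is an isometric `(u,v)`-path of `G` and `e₀` is an edge incident
to `u`, then the vertices of `L(P)` (the edges of `P`) can be covered by two `e₀`-rooted
isometric paths of `L(G)`. -/
theorem line_path_two_rooted_cover (G : SimpleGraph V) (hG : G.Connected)
    {u v : V} (p : G.Walk u v) (hp : IsometricPath G p)
    (e₀ : G.edgeSet) (he₀ : u ∈ (e₀ : Sym2 V)) :
    ∃ (f₁ f₂ : G.edgeSet) (q₁ : G.lineGraph.Walk e₀ f₁) (q₂ : G.lineGraph.Walk e₀ f₂),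
      IsometricPath G.lineGraph q₁ ∧ IsometricPath G.lineGraph q₂ ∧
      ∀ e : G.edgeSet, (e : Sym2 V) ∈ p.edges → e ∈ q₁.support ∨ e ∈ q₂.support :=
  line_path_two_rooted_cover_general G p hp e₀ he₀
end

section
/- Let H be the clique-sum of graphs H₁ and H₂ with common clique C. Let P be an isometric path of H with all vertices in V(H₁) and with one end-vertex in C, and let w be any vertex of H₂. Then the vertices of P can be covered by three w-rooted isometric paths of H. -/
open SimpleGraph

variable {V : Type*}

/-!
Read `P` from its end-vertex `v ∈ C` and give each of its vertices `x` the excess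
`d(w,v) + d(v,x) - d(w,x)`. A shortest `w`–`x` path crosses the clique `C` at some `c`, and
`d(c,v) ≤ 1`, so the excess is `0`, `1` or `2`. If `P_s` and `P_t` are the first and the last
vertex of `P` of excess `k`, then `d(w,P_t) = d(w,P_s) + (t - s)`, so a shortest path from `w`
to `P_s` followed by the segment of `P` from `P_s` to `P_t` is isometric; it covers every
vertex of excess `k`.
-/

variable {G : SimpleGraph V}

theorem isometricPath_of_length_eq_dist {u v : V} {p : G.Walk u v}
    (h : p.length = G.dist u v) : IsometricPath G p :=
  ⟨p.isPath_of_length_eq_dist h, h⟩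

theorem isometricPath_nil (u : V) : IsometricPath G (Walk.nil : G.Walk u u) :=
  isometricPath_of_length_eq_dist (by simp)

theorem IsometricPath.reverse {u v : V} {p : G.Walk u v} (hp : IsometricPath G p) :
    IsometricPath G p.reverse :=
  ⟨Walk.isPath_reverse_iff p |>.mpr hp.1, by rw [Walk.length_reverse, hp.2, dist_comm]⟩

theorem IsometricPath.dist_getVert_s14 {u v : V} {p : G.Walk u v} (hp : IsometricPath G p)
    {i : ℕ} (hi : i ≤ p.length) : G.dist u (p.getVert i) = i := by
  rw [← length_eq_dist_of_subwalk hp.2 (p.isSubwalk_take i), Walk.take_length]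
  exact min_eq_left hi

theorem SimpleGraph.IsClique.dist_le_one {s : Set V} (hs : G.IsClique s) {x y : V}
    (hx : x ∈ s) (hy : y ∈ s) : G.dist x y ≤ 1 := by
  rcases eq_or_ne x y with rfl | hne
  · simp
  · exact (dist_eq_one_iff_adj.mpr (hs hx hy hne)).le

theorem exists_isometricPath_covering_segment (hG : G.Connected) {u v : V} (p : G.Walk u v)
    (w : V) {s t : ℕ} (hst : s ≤ t) (ht : t ≤ p.length)
    (hdist : G.dist w (p.getVert t) = G.dist w (p.getVert s) + (t - s)) :
    ∃ (x : V) (q : G.Walk w x), IsometricPath G q ∧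
      ∀ i, s ≤ i → i ≤ t → p.getVert i ∈ q.support := by
  obtain ⟨r, hr⟩ := hG.exists_walk_length_eq_dist w (p.getVert s)
  let segment := (p.drop s).take (t - s)
  have hend : (p.drop s).getVert (t - s) = p.getVert t := by
    rw [Walk.drop_getVert, Nat.add_sub_cancel' hst]
  refine ⟨_, r.append segment, isometricPath_of_length_eq_dist ?_, fun i hsi hit => ?_⟩
  · simp only [Walk.length_append, Walk.take_length, Walk.drop_length, segment, hr]
    rw [min_eq_left (by omega), hend, hdist]
  · have hi : segment.getVert (i - s) = p.getVert i := by
      simp only [segment, Walk.take_getVert, Walk.drop_getVert]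
      rw [min_eq_right (by omega), Nat.add_sub_cancel' hsi]
    exact Walk.mem_support_append_iff _ _ |>.mpr (.inr (hi ▸ segment.getVert_mem_support _))

theorem exists_isometricPath_covering_excess (hG : G.Connected) {v u : V} {p : G.Walk v u}
    (hp : IsometricPath G p) (w : V) (k : ℕ) :
    ∃ (x : V) (q : G.Walk w x), IsometricPath G q ∧
      ∀ y ∈ p.support, G.dist w v + G.dist v y = G.dist w y + k → y ∈ q.support := by
  classical
  let A := (Finset.range (p.length + 1)).filter
    fun i => G.dist w v + i = G.dist w (p.getVert i) + k
  have index_mem {y : V} (hy : y ∈ p.support)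
      (hk : G.dist w v + G.dist v y = G.dist w y + k) : ∃ i ∈ A, p.getVert i = y := by
    obtain ⟨i, rfl, hi⟩ := Walk.mem_support_iff_exists_getVert.mp hy
    refine ⟨i, Finset.mem_filter.mpr ⟨Finset.mem_range_succ_iff.mpr hi, ?_⟩, rfl⟩
    rwa [hp.dist_getVert_s14 hi] at hk
  rcases A.eq_empty_or_nonempty with hA | hA
  · refine ⟨w, .nil, isometricPath_nil w, fun y hy hk => ?_⟩
    obtain ⟨i, hi, -⟩ := index_mem hy hk
    simp [hA] at hi
  have hmem {i : ℕ} (hi : i ∈ A) :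
      i ≤ p.length ∧ G.dist w v + i = G.dist w (p.getVert i) + k := by
    simpa [A, Nat.lt_succ_iff] using hi
  have hs := hmem (A.min'_mem hA)
  have ht := hmem (A.max'_mem hA)
  have hst := A.min'_le_max' hA
  obtain ⟨x, q, hq, hcover⟩ := exists_isometricPath_covering_segment hG p w
    hst ht.1 (by omega)
  refine ⟨x, q, hq, fun y hy hk => ?_⟩
  obtain ⟨i, hi, rfl⟩ := index_mem hy hk
  exact hcover i (A.min'_le i hi) (A.le_max' i hi)

section CliqueSum

variable {S₁ S₂ : Set V} (hcover : S₁ ∪ S₂ = Set.univ)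
  (hsep : ∀ x ∈ S₁ \ S₂, ∀ y ∈ S₂ \ S₁, ¬ G.Adj x y)
include hcover hsep

theorem SimpleGraph.Walk.exists_mem_support_mem_inter {a b : V} (q : G.Walk a b)
    (ha : a ∈ S₂) (hb : b ∈ S₁) : ∃ c ∈ q.support, c ∈ S₁ ∩ S₂ := by
  have mem_S₂ {x : V} (hx : x ∉ S₁) : x ∈ S₂ := (hcover ▸ Set.mem_univ x).resolve_left hx
  by_cases ha₁ : a ∈ S₁
  · exact ⟨a, q.start_mem_support, ha₁, ha⟩
  obtain ⟨d, hd, hd₁, hd₂⟩ := q.exists_boundary_dart S₁ᶜ ha₁ (by simpa using hb)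
  refine ⟨d.snd, q.dart_snd_mem_support_of_mem_darts hd, not_not.mp hd₂, by_contra fun h => ?_⟩
  exact hsep d.snd ⟨not_not.mp hd₂, h⟩ d.fst ⟨mem_S₂ hd₁, hd₁⟩ d.adj.symm

theorem dist_add_dist_le_dist_add_two (hG : G.Connected) (hclique : G.IsClique (S₁ ∩ S₂))
    {w v x : V} (hw : w ∈ S₂) (hv : v ∈ S₁ ∩ S₂) (hx : x ∈ S₁) :
    G.dist w v + G.dist v x ≤ G.dist w x + 2 := by
  classical
  obtain ⟨r, hr⟩ := hG.exists_walk_length_eq_dist w x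
  obtain ⟨c, hcr, hc⟩ := r.exists_mem_support_mem_inter hcover hsep hw hx
  have hsplit : G.dist w c + G.dist c x = G.dist w x := by
    rw [← length_eq_dist_of_subwalk hr (r.isSubwalk_takeUntil hcr),
      ← length_eq_dist_of_subwalk hr (r.isSubwalk_dropUntil hcr), ← Walk.length_append,
      r.take_spec hcr, hr]
  have hcv := hclique.dist_le_one hc hv
  have hvc := hclique.dist_le_one hv hc
  have hwv := hG.dist_triangle (u := w) (v := c) (w := v)
  have hvx := hG.dist_triangle (u := v) (v := c) (w := x)
  omega

end CliqueSum

/-- let `H` be a clique-sum of `H₁ = H[S₁]` and `H₂ = H[S₂]` with common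
clique `C = S₁ ∩ S₂` (so `S₁ ∪ S₂` covers all vertices, `C` is a clique, and there are no
edges between `S₁ \ S₂` and `S₂ \ S₁`). If `P` is an isometric path of `H` with all
vertices in `S₁` and one end-vertex in `C`, and `w` is any vertex of `H₂`, then the
vertices of `P` can be covered by three `w`-rooted isometric paths of `H`. -/
theorem clique_sum_three_rooted_cover (H : SimpleGraph V) (hH : H.Connected)
    (S₁ S₂ : Set V) (hcover : S₁ ∪ S₂ = Set.univ)
    (hclique : H.IsClique (S₁ ∩ S₂))
    (hsep : ∀ x ∈ S₁ \ S₂, ∀ y ∈ S₂ \ S₁, ¬ H.Adj x y)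
    {u v : V} (p : H.Walk u v) (hp : IsometricPath H p)
    (hP : ∀ x ∈ p.support, x ∈ S₁) (hv : v ∈ S₁ ∩ S₂)
    (w : V) (hw : w ∈ S₂) :
    ∃ (a b c : V) (q₁ : H.Walk w a) (q₂ : H.Walk w b) (q₃ : H.Walk w c),
      IsometricPath H q₁ ∧ IsometricPath H q₂ ∧ IsometricPath H q₃ ∧
      ∀ x ∈ p.support, x ∈ q₁.support ∨ x ∈ q₂.support ∨ x ∈ q₃.support := by
  obtain ⟨a, q₁, hq₁, hcover₁⟩ := exists_isometricPath_covering_excess hH hp.reverse w 0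
  obtain ⟨b, q₂, hq₂, hcover₂⟩ := exists_isometricPath_covering_excess hH hp.reverse w 1
  obtain ⟨c, q₃, hq₃, hcover₃⟩ := exists_isometricPath_covering_excess hH hp.reverse w 2
  refine ⟨a, b, c, q₁, q₂, q₃, hq₁, hq₂, hq₃, fun x hx => ?_⟩
  have hx' : x ∈ p.reverse.support := by simpa using hx
  have hupper := dist_add_dist_le_dist_add_two hcover hsep hH hclique hw hv (hP x hx)
  have hlower := hH.dist_triangle (u := w) (v := v) (w := x)
  obtain h | h | h : H.dist w v + H.dist v x = H.dist w x + 0 ∨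
      H.dist w v + H.dist v x = H.dist w x + 1 ∨
      H.dist w v + H.dist v x = H.dist w x + 2 := by omega
  · exact .inl (hcover₁ x hx' h)
  · exact .inr (.inl (hcover₂ x hx' h))
  · exact .inr (.inr (hcover₃ x hx' h))
end
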